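/- arXiv:2408.10651 — 11 statements merged into one kernel-verified Lean document; each statement's English description precedes it below -/
import Mathlib

section
/- Let G be an edge-coloured graph on n ≥ 3 vertices such that every vertex is incident to edges of at least n/2 distinct colours. If G is not a properly coloured complete bipartite graph K_{n/2,n/2}, not K_4, and not K_4 minus an edge, then G contains a rainbow triangle, i.e., three mutually adjacent vertices whose three connecting edges all have distinct colours. -/
/-!
Suppose `G` has no rainbow triangle, and write `d v` for the degree, `k v` for the colour
degree and `w v = d v - k v`. Summing `d u + d v ≤ n + |N u ∩ N v|` over ordered edges gives
`2 Σ d² ≤ n Σ d + T`, where `T` counts ordered triangles. A triangle that is not rainbow has a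
vertex at which its two edges share a colour, so `T ≤ 3 Σ_v (monochromatic pairs at v)
≤ 3 Σ w (w + 1)`. For `n ≠ 4`, `2k ≥ n` yields `n d + 3 w (w + 1) + w ≤ 2 d²` at every vertex,
so all `w` vanish and `T = 0`: `G` is triangle-free and properly coloured. For `n = 4` a triangle
forces `K_4` or `K_4` minus an edge. Finally, in a triangle-free graph with minimum degree at
least `n / 2` adjacent vertices have complementary neighbourhoods, so `G = K_{n/2,n/2}`.
-/

open Finset

theorem Finset.card_filter_offDiag_eq_le {α β : Type*} [DecidableEq α] [DecidableEq β]
    (s : Finset α) (f : α → β) :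
    #{p ∈ s.offDiag | f p.1 = f p.2} ≤ (#s - #(s.image f)) * (#s - #(s.image f) + 1) := by
  set m : β → ℕ := fun b => #{a ∈ s | f a = b}
  have hm_pos : ∀ b ∈ s.image f, 1 ≤ m b := fun b hb => by
    obtain ⟨a, ha, rfl⟩ := mem_image.mp hb
    exact card_pos.mpr ⟨a, mem_filter.mpr ⟨ha, rfl⟩⟩
  have hexcess : ∑ b ∈ s.image f, (m b - 1) = #s - #(s.image f) := by
    rw [sum_tsub_distrib _ hm_pos, card_eq_sum_card_image f s]
    simp [m]
  set w := #s - #(s.image f)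
  have hm_le : ∀ b ∈ s.image f, m b ≤ w + 1 := fun b hb => by
    have := single_le_sum (f := fun b => m b - 1) (fun _ _ => Nat.zero_le _) hb
    omega
  calc #{p ∈ s.offDiag | f p.1 = f p.2}
      = ∑ b ∈ s.image f, #{a ∈ s | f a = b}.offDiag := by
        rw [card_eq_sum_card_fiberwise (f := fun p => f p.1) (t := s.image f)
          (fun p hp => mem_image_of_mem f (mem_offDiag.mp (mem_filter.mp hp).1).1)]
        refine sum_congr rfl fun b _ => congrArg card ?_
        ext ⟨a, a'⟩
        simp only [mem_filter, mem_offDiag]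
        constructor
        · rintro ⟨⟨⟨ha, ha', hne⟩, hf⟩, rfl⟩
          exact ⟨⟨ha, rfl⟩, ⟨ha', hf.symm⟩, hne⟩
        · rintro ⟨⟨ha, rfl⟩, ⟨ha', hf⟩, hne⟩
          exact ⟨⟨⟨ha, ha', hne⟩, hf.symm⟩, rfl⟩
    _ = ∑ b ∈ s.image f, m b * (m b - 1) := by
        refine sum_congr rfl fun b _ => ?_
        rw [offDiag_card, Nat.mul_sub_one]
    _ ≤ ∑ b ∈ s.image f, (w + 1) * (m b - 1) :=
        sum_le_sum fun b hb => Nat.mul_le_mul_right _ (hm_le b hb)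
    _ = w * (w + 1) := by rw [← mul_sum, hexcess, mul_comm]

theorem Nat.mul_add_three_mul_excess_le_two_mul_sq {n k d : ℕ} (hn : n ≠ 4) (hk : n ≤ 2 * k)
    (hkd : k ≤ d) (hd : d < n) :
    n * d + 3 * ((d - k) * (d - k + 1)) + (d - k) ≤ 2 * (d * d) := by
  obtain ⟨w, rfl⟩ := Nat.exists_eq_add_of_le hkd
  rw [Nat.add_sub_cancel_left]
  have hw : w = 0 ∨ w + 4 ≤ 2 * k := by omega
  rcases hw with rfl | hw
  · nlinarith [Nat.mul_le_mul_left k hk]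
  · nlinarith [Nat.mul_le_mul_left (k + w) hk, Nat.mul_le_mul_left w hw]

namespace SimpleGraph

variable {V α : Type*} (G : SimpleGraph V) (c : V → V → α)

def IsRainbowTriangle (x y z : V) : Prop :=
  G.Adj x y ∧ G.Adj x z ∧ G.Adj y z ∧ c x y ≠ c x z ∧ c x y ≠ c y z ∧ c x z ≠ c y z

theorem adj_complete_or_complete_minus_edge {x y z t : V}
    (huniv : ∀ u, u = x ∨ u = y ∨ u = z ∨ u = t) (hxy : G.Adj x y) (hxz : G.Adj x z)
    (hyz : G.Adj y z) (htx : G.Adj t x) (hty : G.Adj t y) (htz : t ≠ z) :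
    (∀ u v, u ≠ v → G.Adj u v) ∨ ∃ a b, a ≠ b ∧
      ∀ u v, G.Adj u v ↔ (u ≠ v ∧ ¬(u = a ∧ v = b) ∧ ¬(u = b ∧ v = a)) := by
  have hadj : ∀ u v, u ≠ v → ¬(u = t ∧ v = z) → ¬(u = z ∧ v = t) → G.Adj u v := by
    intro u v huv h₁ h₂
    rcases huniv u with rfl | rfl | rfl | rfl <;> rcases huniv v with rfl | rfl | rfl | rfl <;>
      simp_all [G.adj_comm]
  by_cases htz' : G.Adj t z
  · left
    intro u v huv
    by_cases h₁ : u = t ∧ v = z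
    · rwa [h₁.1, h₁.2]
    by_cases h₂ : u = z ∧ v = t
    · rw [h₂.1, h₂.2]; exact htz'.symm
    exact hadj u v huv h₁ h₂
  · right
    refine ⟨t, z, htz, fun u v =>
      ⟨fun h => ⟨G.ne_of_adj h, ?_, ?_⟩, fun h => hadj u v h.1 h.2.1 h.2.2⟩⟩
    · rintro ⟨rfl, rfl⟩; exact htz' h
    · rintro ⟨rfl, rfl⟩; exact htz' h.symm

section Finite

variable [Fintype V] [DecidableRel G.Adj]

theorem complete_or_complete_minus_edge_of_card_eq_four (hV : Fintype.card V = 4)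
    (hdeg : ∀ v, 2 ≤ G.degree v) (h3 : ¬ G.CliqueFree 3) :
    (∀ u v, u ≠ v → G.Adj u v) ∨ ∃ a b, a ≠ b ∧
      ∀ u v, G.Adj u v ↔ (u ≠ v ∧ ¬(u = a ∧ v = b) ∧ ¬(u = b ∧ v = a)) := by
  classical
  obtain ⟨s, hs⟩ : ∃ s, G.IsNClique 3 s := by simpa [CliqueFree] using h3
  obtain ⟨x, y, z, hxy, hxz, hyz, rfl⟩ := is3Clique_iff.mp hs
  have hxyz : #{x, y, z} = 3 :=
    card_eq_three.mpr ⟨x, y, z, G.ne_of_adj hxy, G.ne_of_adj hxz, G.ne_of_adj hyz, rfl⟩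
  obtain ⟨t, -, ht⟩ := exists_mem_notMem_of_card_lt_card (s := {x, y, z}) (t := univ)
    (by rw [hxyz, card_univ, hV]; norm_num)
  have huniv : ∀ u, u = x ∨ u = y ∨ u = z ∨ u = t := by
    have : ({t, x, y, z} : Finset V) = univ :=
      eq_univ_of_card _ (by rw [card_insert_of_notMem ht, hxyz, hV])
    intro u
    have hu : u ∈ ({t, x, y, z} : Finset V) := this ▸ mem_univ u
    simp only [mem_insert, mem_singleton] at hu
    tauto
  simp only [mem_insert, mem_singleton, not_or] at ht
  have htwo : (G.Adj t x ∧ G.Adj t y) ∨ (G.Adj t x ∧ G.Adj t z) ∨ (G.Adj t y ∧ G.Adj t z) := by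
    obtain ⟨a, ha, b, hb, hab⟩ := one_lt_card.mp (hdeg t)
    rw [mem_neighborFinset] at ha hb
    rcases huniv a with rfl | rfl | rfl | rfl <;> rcases huniv b with rfl | rfl | rfl | rfl <;>
      simp_all
  rcases htwo with ⟨htx, hty⟩ | ⟨htx, htz⟩ | ⟨hty, htz⟩
  · exact G.adj_complete_or_complete_minus_edge huniv hxy hxz hyz htx hty ht.2.2
  · exact G.adj_complete_or_complete_minus_edge (fun u => by have := huniv u; tauto)
      hxz hxy hyz.symm htx htz ht.2.1
  · exact G.adj_complete_or_complete_minus_edge (fun u => by have := huniv u; tauto)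
      hyz hxy.symm hxz.symm hty htz ht.1

def orderedTriangles : Finset (V × V × V) :=
  {t | G.Adj t.1 t.2.1 ∧ G.Adj t.1 t.2.2 ∧ G.Adj t.2.1 t.2.2}

variable [DecidableEq α]

def colorDegree (v : V) : ℕ := #((G.neighborFinset v).image (c v))

theorem colorDegree_le_degree (v : V) : G.colorDegree c v ≤ G.degree v := card_image_le

theorem ncard_image_neighborSet (v : V) : (c v '' G.neighborSet v).ncard = G.colorDegree c v := by
  rw [← G.coe_neighborFinset, ← coe_image, Set.ncard_coe_finset, colorDegree]

variable [DecidableEq V]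

def monochromaticPairs (v : V) : Finset (V × V) :=
  {p ∈ (G.neighborFinset v).offDiag | c v p.1 = c v p.2}

theorem card_monochromaticPairs_le (v : V) :
    #(G.monochromaticPairs c v) ≤
      (G.degree v - G.colorDegree c v) * (G.degree v - G.colorDegree c v + 1) :=
  card_filter_offDiag_eq_le _ _

theorem card_orderedTriangles_le (hsym : ∀ u v, c u v = c v u)
    (hno : ∀ x y z, ¬ G.IsRainbowTriangle c x y z) :
    #G.orderedTriangles ≤ 3 * ∑ v, #(G.monochromaticPairs c v) := by
  set T := G.orderedTriangles
  set S := (univ : Finset V).sigma (G.monochromaticPairs c)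
  have hT : ∀ t ∈ T, G.Adj t.1 t.2.1 ∧ G.Adj t.1 t.2.2 ∧ G.Adj t.2.1 t.2.2 := fun t ht =>
    (mem_filter.mp ht).2
  have apex : ∀ f : V × V × V → (_ : V) × V × V, Function.Injective f →
      (∀ t ∈ T, (f t).2.1 ∈ G.neighborFinset (f t).1 ∧ (f t).2.2 ∈ G.neighborFinset (f t).1 ∧
        (f t).2.1 ≠ (f t).2.2) →
      #{t ∈ T | c (f t).1 (f t).2.1 = c (f t).1 (f t).2.2} ≤ #S := fun f hinj hf =>
    card_le_card_of_injOn f (fun t ht => by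
      obtain ⟨ht, hc⟩ := mem_filter.mp ht
      obtain ⟨h1, h2, h3⟩ := hf t ht
      exact mem_sigma.mpr ⟨mem_univ _, mem_filter.mpr ⟨mem_offDiag.mpr ⟨h1, h2, h3⟩, hc⟩⟩)
      hinj.injOn
  have hcover : T ⊆ {t ∈ T | c t.1 t.2.1 = c t.1 t.2.2} ∪ {t ∈ T | c t.2.1 t.1 = c t.2.1 t.2.2} ∪
      {t ∈ T | c t.2.2 t.1 = c t.2.2 t.2.1} := by
    rintro ⟨x, y, z⟩ ht
    obtain ⟨hxy, hxz, hyz⟩ := hT _ ht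
    simp only [mem_union, mem_filter, ht, true_and]
    by_contra! h
    exact hno x y z ⟨hxy, hxz, hyz, h.1.1, by rw [hsym x y]; exact h.1.2, by
      rw [hsym x z, hsym y z]; exact h.2⟩
  calc #T ≤ _ := card_le_card hcover
    _ ≤ #S + #S + #S := by
      refine (card_union_le _ _).trans (add_le_add ((card_union_le _ _).trans
        (add_le_add ?_ ?_)) ?_)
      · refine apex (fun t => ⟨t.1, t.2.1, t.2.2⟩) (fun ⟨_, _, _⟩ ⟨_, _, _⟩ h => by simp_all)
          fun t ht => ?_
        obtain ⟨hxy, hxz, hyz⟩ := hT t ht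
        simpa [hxy, hxz] using hyz.ne
      · refine apex (fun t => ⟨t.2.1, t.1, t.2.2⟩) (fun ⟨_, _, _⟩ ⟨_, _, _⟩ h => by simp_all)
          fun t ht => ?_
        obtain ⟨hxy, hxz, hyz⟩ := hT t ht
        simpa [hxy.symm, hyz] using hxz.ne
      · refine apex (fun t => ⟨t.2.2, t.1, t.2.1⟩) (fun ⟨_, _, _⟩ ⟨_, _, _⟩ h => by simp_all)
          fun t ht => ?_
        obtain ⟨hxy, hxz, hyz⟩ := hT t ht
        simpa [hxz.symm, hyz.symm] using hxy.ne
    _ = 3 * ∑ v, #(G.monochromaticPairs c v) := by rw [card_sigma]; ring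

theorem card_orderedTriangles_eq : #G.orderedTriangles =
    ∑ x, ∑ y ∈ G.neighborFinset x, #(G.neighborFinset x ∩ G.neighborFinset y) := by
  simp only [orderedTriangles, card_filter, Fintype.sum_prod_type, neighborFinset_eq_filter,
    sum_filter, ← filter_and]
  refine sum_congr rfl fun x _ => sum_congr rfl fun y _ => ?_
  split_ifs with hxy <;> simp [hxy]

theorem degree_add_degree_le_card_add_card_inter (x y : V) :
    G.degree x + G.degree y ≤ Fintype.card V + #(G.neighborFinset x ∩ G.neighborFinset y) := by
  rw [← card_neighborFinset_eq_degree, ← card_neighborFinset_eq_degree,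
    ← card_union_add_card_inter]
  exact Nat.add_le_add_right (card_le_univ _) _

theorem two_mul_sum_degree_mul_self_le :
    2 * ∑ v, G.degree v * G.degree v ≤ Fintype.card V * ∑ v, G.degree v + #G.orderedTriangles := by
  have hswap : ∑ x, ∑ y ∈ G.neighborFinset x, G.degree y = ∑ y, G.degree y * G.degree y := by
    rw [sum_comm' (t' := univ) (s' := fun y => G.neighborFinset y)
      (fun x y => by simp [G.adj_comm])]
    simp
  calc 2 * ∑ v, G.degree v * G.degree v
      = ∑ x, ∑ y ∈ G.neighborFinset x, (G.degree x + G.degree y) := by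
        simp only [sum_add_distrib, hswap, sum_const, card_neighborFinset_eq_degree, smul_eq_mul]
        ring
    _ ≤ ∑ x, ∑ y ∈ G.neighborFinset x,
          (Fintype.card V + #(G.neighborFinset x ∩ G.neighborFinset y)) :=
        sum_le_sum fun x _ => sum_le_sum fun y _ => G.degree_add_degree_le_card_add_card_inter x y
    _ = Fintype.card V * ∑ v, G.degree v + #G.orderedTriangles := by
        simp only [sum_add_distrib, sum_const, card_neighborFinset_eq_degree, smul_eq_mul,
          card_orderedTriangles_eq, ← sum_mul]
        ring

theorem cliqueFree_three_of_forall_not_isRainbowTriangle (hn : Fintype.card V ≠ 4)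
    (hsym : ∀ u v, c u v = c v u) (hno : ∀ x y z, ¬ G.IsRainbowTriangle c x y z)
    (hcol : ∀ v, Fintype.card V ≤ 2 * G.colorDegree c v) : G.CliqueFree 3 := by
  set w : V → ℕ := fun v => G.degree v - G.colorDegree c v
  have hvert : ∀ v, Fintype.card V * G.degree v + 3 * (w v * (w v + 1)) + w v ≤
      2 * (G.degree v * G.degree v) := fun v =>
    Nat.mul_add_three_mul_excess_le_two_mul_sq hn (hcol v) (G.colorDegree_le_degree c v)
      (G.degree_lt_card_verts v)
  have hvert_sum := sum_le_sum fun v (_ : v ∈ univ) => hvert v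
  have hmono_sum : ∑ v, #(G.monochromaticPairs c v) ≤ ∑ v, w v * (w v + 1) :=
    sum_le_sum fun v _ => G.card_monochromaticPairs_le c v
  simp only [sum_add_distrib, ← mul_sum] at hvert_sum
  have hT := G.card_orderedTriangles_le c hsym hno
  have hsq := G.two_mul_sum_degree_mul_self_le
  -- `n Σ d + 3 Σ w(w+1) + Σ w ≤ 2 Σ d² ≤ n Σ d + #T ≤ n Σ d + 3 Σ w(w+1)`
  have hw : ∀ v, w v = 0 := fun v => sum_eq_zero_iff.mp (by omega) v (mem_univ v)
  have hT0 : G.orderedTriangles = ∅ := by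
    simp only [hw, zero_mul, sum_const_zero] at hmono_sum
    exact card_eq_zero.mp (by omega)
  intro s hs
  obtain ⟨x, y, z, hxy, hxz, hyz, rfl⟩ := is3Clique_iff.mp hs
  have : (x, y, z) ∈ G.orderedTriangles := mem_filter.mpr ⟨mem_univ _, hxy, hxz, hyz⟩
  simp [hT0] at this

theorem disjoint_neighborFinset_of_adj (htf : G.CliqueFree 3) {u v : V} (h : G.Adj u v) :
    Disjoint (G.neighborFinset u) (G.neighborFinset v) := by
  refine Finset.disjoint_left.mpr fun w hu hv => htf {u, v, w} (is3Clique_triple_iff.mpr ?_)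
  exact ⟨h, (G.mem_neighborFinset u w).mp hu, (G.mem_neighborFinset v w).mp hv⟩

theorem degree_add_degree_le_card_of_adj (htf : G.CliqueFree 3) {u v : V} (h : G.Adj u v) :
    G.degree u + G.degree v ≤ Fintype.card V := by
  rw [← card_neighborFinset_eq_degree, ← card_neighborFinset_eq_degree,
    ← card_union_of_disjoint (G.disjoint_neighborFinset_of_adj htf h)]
  exact card_le_univ _

theorem neighborFinset_eq_compl_of_adj (htf : G.CliqueFree 3)
    (hdeg : ∀ v, Fintype.card V ≤ 2 * G.degree v) {u v : V} (h : G.Adj u v) :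
    G.neighborFinset v = (G.neighborFinset u)ᶜ := by
  refine eq_of_subset_of_card_le
    (subset_compl_iff_disjoint_left.mpr (G.disjoint_neighborFinset_of_adj htf h)) ?_
  have := hdeg u
  have := hdeg v
  have := G.degree_add_degree_le_card_of_adj htf h
  rw [card_compl, card_neighborFinset_eq_degree, card_neighborFinset_eq_degree]
  omega

theorem exists_balanced_bipartition_of_cliqueFree_three (htf : G.CliqueFree 3)
    (hdeg : ∀ v, Fintype.card V ≤ 2 * G.degree v) :
    ∃ A : Finset V, 2 * #A = Fintype.card V ∧ ∀ u v, G.Adj u v ↔ (u ∈ A ↔ v ∉ A) := by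
  rcases isEmpty_or_nonempty V with _ | ⟨⟨v₀⟩⟩
  · exact ⟨∅, by simp, fun u => isEmptyElim u⟩
  obtain ⟨u₀, hu₀⟩ : ∃ u, G.Adj v₀ u := by
    have := hdeg v₀
    have := Fintype.card_pos_iff.mpr ⟨v₀⟩
    exact G.degree_pos_iff_exists_adj v₀ |>.mp (by omega)
  set A := G.neighborFinset v₀
  have hu₀A : G.neighborFinset u₀ = Aᶜ := G.neighborFinset_eq_compl_of_adj htf hdeg hu₀
  have hin : ∀ x ∈ A, G.neighborFinset x = Aᶜ := fun x hx =>
    G.neighborFinset_eq_compl_of_adj htf hdeg ((G.mem_neighborFinset v₀ x).mp hx)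
  have hout : ∀ x ∉ A, G.neighborFinset x = A := fun x hx => by
    have hx' : G.Adj u₀ x := by rw [← mem_neighborFinset, hu₀A, mem_compl]; exact hx
    rw [G.neighborFinset_eq_compl_of_adj htf hdeg hx', hu₀A, compl_compl]
  refine ⟨A, ?_, fun u v => ?_⟩
  · have hA : Fintype.card V ≤ 2 * #A := hdeg v₀
    have hAc : Fintype.card V ≤ 2 * #Aᶜ := hu₀A ▸ hdeg u₀
    have := card_add_card_compl A
    omega
  · rw [← mem_neighborFinset]
    by_cases hu : u ∈ A
    · simp [hin u hu, hu]
    · simp [hout u hu, hu]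

theorem colorDegree_eq_degree_of_cliqueFree_three (htf : G.CliqueFree 3)
    (hcol : ∀ v, Fintype.card V ≤ 2 * G.colorDegree c v) (v : V) :
    G.colorDegree c v = G.degree v := by
  refine le_antisymm (G.colorDegree_le_degree c v) ?_
  have := hcol v
  have := G.colorDegree_le_degree c v
  have := Fintype.card_pos_iff.mpr ⟨v⟩
  obtain ⟨u, hu⟩ := G.degree_pos_iff_exists_adj v |>.mp (by omega)
  have := G.degree_add_degree_le_card_of_adj htf hu
  have := hcol u
  have := G.colorDegree_le_degree c u
  omega

end Finite

end SimpleGraph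

theorem stmt_0_general (n : ℕ) (G : SimpleGraph (Fin n))
    (c : Fin n → Fin n → ℕ) (hsym : ∀ u v, c u v = c v u)
    (hdeg : ∀ v : Fin n, (n : ℝ) / 2 ≤ (Set.ncard ((c v) '' {w | G.Adj v w}) : ℝ))
    (hbip : ¬ ∃ A : Finset (Fin n), 2 * A.card = n ∧
      (∀ u v : Fin n, G.Adj u v ↔ ((u ∈ A) ↔ (v ∉ A))) ∧
      (∀ u v w : Fin n, G.Adj u v → G.Adj u w → v ≠ w → c u v ≠ c u w))
    (hK4 : ¬ (n = 4 ∧ ∀ u v : Fin n, u ≠ v → G.Adj u v))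
    (hK4e : ¬ (n = 4 ∧ ∃ a b : Fin n, a ≠ b ∧
      ∀ u v : Fin n, G.Adj u v ↔ (u ≠ v ∧ ¬(u = a ∧ v = b) ∧ ¬(u = b ∧ v = a)))) :
    ∃ x y z : Fin n, G.Adj x y ∧ G.Adj x z ∧ G.Adj y z ∧
      c x y ≠ c x z ∧ c x y ≠ c y z ∧ c x z ≠ c y z := by
  classical
  by_contra hno
  replace hno : ∀ x y z, ¬ G.IsRainbowTriangle c x y z := fun x y z h => hno ⟨x, y, z, h⟩
  have hcol : ∀ v, Fintype.card (Fin n) ≤ 2 * G.colorDegree c v := fun v => by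
    have h : (n : ℝ) / 2 ≤ G.colorDegree c v := G.ncard_image_neighborSet c v ▸ hdeg v
    rw [Fintype.card_fin]
    exact_mod_cast (by linarith : (n : ℝ) ≤ 2 * G.colorDegree c v)
  have hmindeg : ∀ v, Fintype.card (Fin n) ≤ 2 * G.degree v := fun v =>
    (hcol v).trans (Nat.mul_le_mul_left 2 (G.colorDegree_le_degree c v))
  have htf : G.CliqueFree 3 := by
    by_cases h4 : n = 4
    · subst h4
      by_contra h3
      have h2 : ∀ v, 2 ≤ G.degree v := fun v => by
        have := hmindeg v
        rw [Fintype.card_fin] at this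
        omega
      rcases G.complete_or_complete_minus_edge_of_card_eq_four (Fintype.card_fin 4) h2 h3
        with hK | hKe
      · exact hK4 ⟨rfl, hK⟩
      · exact hK4e ⟨rfl, hKe⟩
    · exact G.cliqueFree_three_of_forall_not_isRainbowTriangle c (by simpa using h4) hsym hno hcol
  obtain ⟨A, hA, hadj⟩ := G.exists_balanced_bipartition_of_cliqueFree_three htf hmindeg
  refine hbip ⟨A, by simpa using hA, hadj, fun u v w huv huw hvw hc => hvw ?_⟩
  have hinj : Set.InjOn (c u) (G.neighborFinset u) :=
    card_image_iff.mp (G.colorDegree_eq_degree_of_cliqueFree_three c htf hcol u)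
  exact hinj (by simpa using huv) (by simpa using huw) hc

/-- Li–Ning–Xu–Zhang: an edge-coloured graph on `n ≥ 3` vertices with minimum colour
degree at least `n/2` which is not a properly coloured `K_{n/2,n/2}`, not `K_4` and not
`K_4` minus an edge contains a rainbow triangle. -/
theorem stmt_0 (n : ℕ) (hn : 3 ≤ n) (G : SimpleGraph (Fin n))
    (c : Fin n → Fin n → ℕ) (hsym : ∀ u v, c u v = c v u)
    (hdeg : ∀ v : Fin n, (n : ℝ) / 2 ≤ (Set.ncard ((c v) '' {w | G.Adj v w}) : ℝ))
    (hbip : ¬ ∃ A : Finset (Fin n), 2 * A.card = n ∧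
      (∀ u v : Fin n, G.Adj u v ↔ ((u ∈ A) ↔ (v ∉ A))) ∧
      (∀ u v w : Fin n, G.Adj u v → G.Adj u w → v ≠ w → c u v ≠ c u w))
    (hK4 : ¬ (n = 4 ∧ ∀ u v : Fin n, u ≠ v → G.Adj u v))
    (hK4e : ¬ (n = 4 ∧ ∃ a b : Fin n, a ≠ b ∧
      ∀ u v : Fin n, G.Adj u v ↔ (u ≠ v ∧ ¬(u = a ∧ v = b) ∧ ¬(u = b ∧ v = a)))) :
    ∃ x y z : Fin n, G.Adj x y ∧ G.Adj x z ∧ G.Adj y z ∧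
      c x y ≠ c x z ∧ c x y ≠ c y z ∧ c x z ≠ c y z :=
  stmt_0_general n G c hsym hdeg hbip hK4 hK4e
end

section
/- For all natural numbers n, k with n/9 ≤ k ≤ n/3 and n ≡ 2k (mod 7), there exists an edge-coloured graph G on n vertices with minimum colour degree exactly (n+12k)/7 − 1 that contains no collection of k pairwise vertex-disjoint rainbow triangles. -/
/-!
Write `[0, n) = A₀ ∪ A₁ ∪ X ∪ Y` as consecutive intervals with endpoints `t₁ ≤ t₂ ≤ t₃`, and let
`A = A₀ ∪ A₁`. The graph consists of a clique on `A`, all edges between `A₁` and `X ∪ Y`, and all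
edges between `X` and `Y`. The edges from `a ∈ A₁` to `X ∪ Y` form a star of colour `a`; every
other edge gets a colour of its own. An `A₁`-vertex with two neighbours in `X ∪ Y` sees one colour
on both edges, and `X ∪ Y` spans no triangle, so a rainbow triangle either lies in `A` or has two
vertices in `A₁`. Weighting `A₀` by `2` and `A₁` by `3`, every rainbow triangle has weight at
least `6`, while the total weight `2|A₀| + 3|A₁|` is less than `6k`. A vertex of `Y` sees exactly
`t₃ - t₁` colours and no vertex sees fewer.

For `n = 7m + 2k` the sizes `|A₀|, |A₁|, |X|, |Y|` are `3m + 1, 2k - 2m - 1, 3m, 3m` if `m < k`,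
and `0, 0, 3k - 1, 6k + 1` if `m = k`.
-/

open Finset

section ColouredGraph

variable {V α : Type*}

noncomputable def colourDegree (G : SimpleGraph V) (c : V → V → α) (v : V) : ℕ :=
  (c v '' G.neighborSet v).ncard

def IsRainbowTriangle [DecidableEq V] (G : SimpleGraph V) (c : V → V → α) (S : Finset V) : Prop :=
  ∃ x y z : V, S = {x, y, z} ∧ G.Adj x y ∧ G.Adj x z ∧ G.Adj y z ∧
    c x y ≠ c x z ∧ c x y ≠ c y z ∧ c x z ≠ c y z

def IsRainbowTriangleTiling [DecidableEq V] (G : SimpleGraph V) (c : V → V → α)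
    (T : Finset (Finset V)) : Prop :=
  (∀ S ∈ T, IsRainbowTriangle G c S) ∧ (T : Set (Finset V)).PairwiseDisjoint id

lemma le_colourDegree_of_injOn [Finite V] {G : SimpleGraph V} {c : V → V → α} {v : V}
    {s : Set V} (hs : s ⊆ G.neighborSet v) (hinj : s.InjOn (c v)) :
    s.ncard ≤ colourDegree G c v := by
  rw [colourDegree, ← hinj.ncard_image]
  exact Set.ncard_le_ncard (Set.image_mono hs) (Set.toFinite _)

lemma colourDegree_eq_of_injOn {G : SimpleGraph V} {c : V → V → α} {v : V}
    (hinj : (G.neighborSet v).InjOn (c v)) : colourDegree G c v = (G.neighborSet v).ncard :=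
  hinj.ncard_image

end ColouredGraph

lemma Finset.card_mul_le_sum_of_pairwiseDisjoint {V : Type*} [Fintype V] [DecidableEq V]
    {T : Finset (Finset V)} (hT : (T : Set (Finset V)).PairwiseDisjoint id) (f : V → ℕ)
    {b : ℕ} (hb : ∀ S ∈ T, b ≤ ∑ v ∈ S, f v) : #T * b ≤ ∑ v, f v :=
  calc #T * b ≤ ∑ S ∈ T, ∑ v ∈ S, f v := by simpa using T.card_nsmul_le_sum _ b hb
    _ = ∑ v ∈ T.biUnion id, f v := (sum_biUnion hT).symm
    _ ≤ ∑ v, f v := sum_le_sum_of_subset (subset_univ _)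

lemma Fin.ncard_setOf_val_mem {n : ℕ} {s : Finset ℕ} (hs : ∀ m ∈ s, m < n) :
    {u : Fin n | (u : ℕ) ∈ s}.ncard = #s := by
  rw [← card_attachFin s hs, ← Set.ncard_coe_finset]
  congr
  ext u
  simp

namespace RainbowTilingExtremal

def graph (n t₁ t₂ t₃ : ℕ) : SimpleGraph (Fin n) :=
  SimpleGraph.fromRel fun u v =>
    (u : ℕ) < t₂ ∧ (v : ℕ) < t₂ ∨ t₁ ≤ (u : ℕ) ∧ (u : ℕ) < t₂ ∧ t₂ ≤ (v : ℕ) ∨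
      t₂ ≤ (u : ℕ) ∧ (u : ℕ) < t₃ ∧ t₃ ≤ (v : ℕ)

def colouring (n t₁ t₂ : ℕ) (u v : Fin n) : ℕ :=
  if t₁ ≤ min (u : ℕ) v ∧ min (u : ℕ) v < t₂ ∧ t₂ ≤ max (u : ℕ) v then min (u : ℕ) v
  else n + Nat.pair (min (u : ℕ) v) (max (u : ℕ) v)

def weight (t₁ t₂ i : ℕ) : ℕ :=
  if i < t₁ then 2 else if i < t₂ then 3 else 0

variable {n : ℕ} {t₁ t₂ t₃ : ℕ}

lemma graph_adj {u v : Fin n} : (graph n t₁ t₂ t₃).Adj u v ↔ (u : ℕ) ≠ v ∧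
    ((u : ℕ) < t₂ ∧ (v : ℕ) < t₂ ∨ t₁ ≤ (u : ℕ) ∧ (u : ℕ) < t₂ ∧ t₂ ≤ (v : ℕ) ∨
      t₁ ≤ (v : ℕ) ∧ (v : ℕ) < t₂ ∧ t₂ ≤ (u : ℕ) ∨ t₂ ≤ (u : ℕ) ∧ (u : ℕ) < t₃ ∧ t₃ ≤ (v : ℕ) ∨
      t₂ ≤ (v : ℕ) ∧ (v : ℕ) < t₃ ∧ t₃ ≤ (u : ℕ)) := by
  simp only [graph, SimpleGraph.fromRel_adj, ne_eq, Fin.val_inj]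
  omega

lemma colouring_comm (u v : Fin n) : colouring n t₁ t₂ u v = colouring n t₁ t₂ v u := by
  simp only [colouring, min_comm (u : ℕ), max_comm (u : ℕ)]

lemma colouring_of_star {a u : Fin n} (ha₁ : t₁ ≤ a) (ha₂ : (a : ℕ) < t₂) (hu : t₂ ≤ (u : ℕ)) :
    colouring n t₁ t₂ a u = a := by
  rw [colouring, if_pos (by omega)]
  omega

lemma colouring_injOn (v : Fin n) : Set.InjOn (colouring n t₁ t₂ v)
    {u | u ≠ v ∧ ¬(t₁ ≤ (v : ℕ) ∧ (v : ℕ) < t₂ ∧ t₂ ≤ (u : ℕ))} := by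
  rintro u ⟨huv, hu⟩ w ⟨hwv, hw⟩ h
  rw [← Fin.val_ne_iff] at huv hwv
  have := u.isLt; have := w.isLt
  rw [Fin.ext_iff]
  unfold colouring at h
  split_ifs at h
  all_goals first
    | omega
    | obtain ⟨hmin, hmax⟩ := Nat.pair_eq_pair.1 (Nat.add_left_cancel h); omega

lemma colourDegree_eq_ncard_neighborSet {v : Fin n} (hv : t₂ ≤ (v : ℕ)) :
    colourDegree (graph n t₁ t₂ t₃) (colouring n t₁ t₂) v =
      ((graph n t₁ t₂ t₃).neighborSet v).ncard :=
  colourDegree_eq_of_injOn <| (colouring_injOn v).mono fun _ hu => by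
    exact ⟨((graph n t₁ t₂ t₃).ne_of_adj hu).symm, by omega⟩

lemma sub_one_le_colourDegree {v : Fin n} (h₂ : t₂ ≤ n) (hv : (v : ℕ) < t₂) :
    t₂ - 1 ≤ colourDegree (graph n t₁ t₂ t₃) (colouring n t₁ t₂) v := by
  have hA : ∀ m ∈ (range t₂).erase v, m < n := by
    intro m hm
    rw [mem_erase, mem_range] at hm
    omega
  have hcard : {u : Fin n | (u : ℕ) ∈ (range t₂).erase v}.ncard = t₂ - 1 := by
    rw [Fin.ncard_setOf_val_mem hA, card_erase_of_mem (mem_range.2 hv), card_range]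
  rw [← hcard]
  refine le_colourDegree_of_injOn (fun u hu => ?_) ((colouring_injOn v).mono fun u hu => ?_) <;>
    simp only [Set.mem_ofPred_eq, mem_erase, mem_range, SimpleGraph.mem_neighborSet, graph_adj,
      ne_eq, ← Fin.val_inj] at hu ⊢ <;>
    omega

lemma colourDegree_of_le_of_lt {v : Fin n} (h₂₃ : t₂ ≤ t₃) (h₃ : t₃ ≤ n)
    (hv₂ : t₂ ≤ (v : ℕ)) (hv₃ : (v : ℕ) < t₃) :
    colourDegree (graph n t₁ t₂ t₃) (colouring n t₁ t₂) v = t₂ - t₁ + (n - t₃) := by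
  have hX : ∀ m ∈ Ico t₁ t₂ ∪ Ico t₃ n, m < n := by
    intro m hm
    simp only [mem_union, mem_Ico] at hm
    omega
  have hdisj : Disjoint (Ico t₁ t₂) (Ico t₃ n) :=
    (Ico_disjoint_Ico_consecutive t₁ t₂ n).mono_right (Ico_subset_Ico_left h₂₃)
  rw [colourDegree_eq_ncard_neighborSet hv₂, ← Nat.card_Ico t₁ t₂, ← Nat.card_Ico t₃ n,
    ← card_union_of_disjoint hdisj, ← Fin.ncard_setOf_val_mem hX]
  congr
  ext u
  simp only [SimpleGraph.mem_neighborSet, graph_adj, Set.mem_ofPred_eq, mem_union, mem_Ico]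
  omega

lemma colourDegree_of_le {v : Fin n} (h₁₂ : t₁ ≤ t₂) (h₂₃ : t₂ ≤ t₃) (hv : t₃ ≤ (v : ℕ)) :
    colourDegree (graph n t₁ t₂ t₃) (colouring n t₁ t₂) v = t₃ - t₁ := by
  have hY : ∀ m ∈ Ico t₁ t₃, m < n := fun m hm => by
    have := v.isLt
    rw [mem_Ico] at hm
    omega
  rw [colourDegree_eq_ncard_neighborSet (by omega), ← Nat.card_Ico t₁ t₃,
    ← Fin.ncard_setOf_val_mem hY]
  congr
  ext u
  simp only [SimpleGraph.mem_neighborSet, graph_adj, Set.mem_ofPred_eq, mem_Ico]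
  omega

lemma sum_range_weight (h₁₂ : t₁ ≤ t₂) (m : ℕ) :
    ∑ i ∈ range m, weight t₁ t₂ i = 2 * min m t₁ + 3 * (min m t₂ - min m t₁) := by
  induction m with
  | zero => simp
  | succ m ih =>
    rw [sum_range_succ, ih, weight]
    split_ifs <;> omega

lemma six_le_weight_of_rainbow {x y z : Fin n} (hxy : (graph n t₁ t₂ t₃).Adj x y)
    (hxz : (graph n t₁ t₂ t₃).Adj x z) (hyz : (graph n t₁ t₂ t₃).Adj y z)
    (hxy_xz : colouring n t₁ t₂ x y ≠ colouring n t₁ t₂ x z)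
    (hxy_yz : colouring n t₁ t₂ x y ≠ colouring n t₁ t₂ y z)
    (hxz_yz : colouring n t₁ t₂ x z ≠ colouring n t₁ t₂ y z) :
    6 ≤ weight t₁ t₂ x + weight t₁ t₂ y + weight t₁ t₂ z := by
  rw [graph_adj] at hxy hxz hyz
  by_contra hlt
  have hstar : t₁ ≤ (x : ℕ) ∧ (x : ℕ) < t₂ ∧ t₂ ≤ (y : ℕ) ∧ t₂ ≤ (z : ℕ) ∨
      t₁ ≤ (y : ℕ) ∧ (y : ℕ) < t₂ ∧ t₂ ≤ (x : ℕ) ∧ t₂ ≤ (z : ℕ) ∨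
      t₁ ≤ (z : ℕ) ∧ (z : ℕ) < t₂ ∧ t₂ ≤ (x : ℕ) ∧ t₂ ≤ (y : ℕ) := by
    simp only [weight] at hlt
    split_ifs at hlt <;> omega
  rcases hstar with ⟨h₁, h₂, hy, hz⟩ | ⟨h₁, h₂, hx, hz⟩ | ⟨h₁, h₂, hx, hy⟩
  · exact hxy_xz <| (colouring_of_star h₁ h₂ hy).trans (colouring_of_star h₁ h₂ hz).symm
  · exact hxy_yz <| (colouring_comm x y).trans <|
      (colouring_of_star h₁ h₂ hx).trans (colouring_of_star h₁ h₂ hz).symm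
  · exact hxz_yz <| (colouring_comm x z).trans <| (colouring_of_star h₁ h₂ hx).trans <|
      (colouring_of_star h₁ h₂ hy).symm.trans (colouring_comm y z).symm

lemma not_isRainbowTriangleTiling (h₁₂ : t₁ ≤ t₂) (h₂ : t₂ ≤ n) {T : Finset (Finset (Fin n))}
    (hT : 2 * t₁ + 3 * (t₂ - t₁) < 6 * #T) :
    ¬ IsRainbowTriangleTiling (graph n t₁ t₂ t₃) (colouring n t₁ t₂) T := by
  rintro ⟨hrainbow, hdisj⟩
  have hS : ∀ S ∈ T, 6 ≤ ∑ v ∈ S, weight t₁ t₂ v := by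
    intro S hS
    obtain ⟨x, y, z, rfl, hxy, hxz, hyz, hc⟩ := hrainbow S hS
    rw [sum_insert (by simp [hxy.ne, hxz.ne]), sum_pair hyz.ne, ← add_assoc]
    exact six_le_weight_of_rainbow hxy hxz hyz hc.1 hc.2.1 hc.2.2
  have := card_mul_le_sum_of_pairwiseDisjoint hdisj (fun v => weight t₁ t₂ v) hS
  rw [Fin.sum_univ_eq_sum_range (weight t₁ t₂), sum_range_weight h₁₂] at this
  omega

end RainbowTilingExtremal

open RainbowTilingExtremal

/-- For `n/9 ≤ k ≤ n/3` with `n ≡ 2k (mod 7)` there is an edge-coloured graph on `n`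
vertices with minimum colour degree exactly `(n+12k)/7 - 1` and no `k` pairwise
vertex-disjoint rainbow triangles. -/
theorem stmt_2 (n k : ℕ) (hk : 1 ≤ k) (h1 : n ≤ 9 * k) (h2 : 3 * k ≤ n)
    (h3 : n % 7 = (2 * k) % 7) :
    ∃ (G : SimpleGraph (Fin n)) (c : Fin n → Fin n → ℕ),
      (∀ u v, c u v = c v u) ∧
      (∀ v : Fin n, (n + 12 * k) / 7 - 1 ≤ Set.ncard ((c v) '' {w | G.Adj v w})) ∧
      (∃ v : Fin n, Set.ncard ((c v) '' {w | G.Adj v w}) = (n + 12 * k) / 7 - 1) ∧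
      ¬ ∃ T : Finset (Finset (Fin n)), T.card = k ∧
        (∀ S ∈ T, ∃ x y z : Fin n, S = {x, y, z} ∧
          G.Adj x y ∧ G.Adj x z ∧ G.Adj y z ∧
          c x y ≠ c x z ∧ c x y ≠ c y z ∧ c x z ≠ c y z) ∧
        (∀ S ∈ T, ∀ S' ∈ T, S ≠ S' → Disjoint S S') := by
  obtain ⟨t₁, t₂, t₃, h₁₂, h₂₃, h₃, hY, hX, hA, hweight⟩ : ∃ t₁ t₂ t₃ : ℕ,
      t₁ ≤ t₂ ∧ t₂ ≤ t₃ ∧ t₃ < n ∧ t₃ - t₁ = (n + 12 * k) / 7 - 1 ∧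
      (n + 12 * k) / 7 - 1 ≤ t₂ - t₁ + (n - t₃) ∧ (t₂ = 0 ∨ (n + 12 * k) / 7 ≤ t₂) ∧
      2 * t₁ + 3 * (t₂ - t₁) < 6 * k := by
    obtain ⟨m, rfl⟩ : ∃ m, n = 7 * m + 2 * k := ⟨(n - 2 * k) / 7, by omega⟩
    rcases (by omega : m < k ∨ m = k) with hm | rfl
    · exact ⟨3 * m + 1, 2 * k + m, 2 * k + 4 * m, by omega⟩
    · exact ⟨0, 0, 3 * m - 1, by omega⟩
  refine ⟨graph n t₁ t₂ t₃, colouring n t₁ t₂, colouring_comm, fun v => ?_,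
    ⟨⟨n - 1, by omega⟩, (colourDegree_of_le h₁₂ h₂₃ (by simp; omega)).trans hY⟩,
    fun ⟨T, hcard, hT⟩ => not_isRainbowTriangleTiling h₁₂ (by omega) (by omega) hT⟩
  rcases lt_or_ge (v : ℕ) t₂ with hv₂ | hv₂
  · exact le_trans (by omega) (sub_one_le_colourDegree (h₂₃.trans h₃.le) hv₂)
  rcases lt_or_ge (v : ℕ) t₃ with hv₃ | hv₃
  · exact (colourDegree_of_le_of_lt h₂₃ h₃.le hv₂ hv₃).ge.trans' hX
  · exact (colourDegree_of_le h₁₂ h₂₃ hv₃).ge.trans' hY.ge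
end

section
/- Let r ≥ 5 and γ > 0, and let G be a digraph on n vertices (n sufficiently large) in which every vertex has out-degree at least (1 − 1/((2r−3)r) + γ)n. Then G contains a perfect fractional (r, r−2)-tiling: a function ω* from the set of copies of members of K_{r,r−2} in G to [0,1] such that for every vertex v, the total weight of copies containing v equals exactly 1. -/
/-- `S` spans a member of `K_{r,s}(G)`: `r` vertices, complete base graph and minimum
out-degree at least `s` inside `S`. -/
def IsKrs {n : ℕ} (G : Fin n → Fin n → Prop) (r s : ℕ) (S : Finset (Fin n)) : Prop :=
  S.card = r ∧ (∀ x ∈ S, ∀ y ∈ S, x ≠ y → G x y ∨ G y x) ∧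
    (∀ x ∈ S, s ≤ Set.ncard {y | y ∈ S ∧ G x y})

/-!
Perfect fractional tilings are the feasible points of a linear program, so by Farkas' lemma
(Hahn–Banach separation in `V → ℝ`) one exists as soon as every vertex weighting `y` of positive
total weight puts nonnegative weight on some copy of a member of `K_{r,r-2}`.

To find a heavy copy, list the vertices by decreasing weight and let `q = ⌊n/r⌋`. Start from the
heaviest vertex `v` and greedily pick `u₁, …, u_{r-1}`, where `uᵢ` is an out-neighbour of `v`
joined in both directions to every earlier `uⱼ`, has in-degree at least `(1 - δ)n`, and is among
the first `iq + 1` vertices of the list. With `ε = 1/((2r-3)r)` and `δ = 1/(2r-4)`, every vertex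
misses at most `(ε - γ)n` out-neighbours, and by double counting at most `(ε - γ)n/δ` vertices
have in-degree below `(1 - δ)n`; since `(ε - γ)/δ + (ε - γ) = 1/r - (2r-3)γ` and `ε + δ ≤ 1/r`,
fewer than `iq + 1` vertices are excluded at step `i`. In `{v, u₁, …, u_{r-1}}` the vertex `v`
has out-degree `r - 1` and each `uᵢ` out-degree `r - 2`, and its weight is at least
`∑_{i<r} y_(iq)`, where `y_(k)` is the `(k+1)`-st largest weight; this sum is positive because
the sorted weights decrease.
-/

open Finset

namespace Antitone

variable {a : ℕ → ℝ}

theorem mul_sum_range_le_mul_sum_range (ha : Antitone a) {m n : ℕ} (hmn : m ≤ n) :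
    m * ∑ j ∈ range n, a j ≤ n * ∑ j ∈ range m, a j := by
  have hmono : MonovaryOn a (fun j => if j < m then (1 : ℝ) else 0) (range n) := by
    intro i _ j _ hij
    simp only at hij
    split_ifs at hij with hi hj <;> first | exact ha (by omega) | norm_num at hij
  have hfilter : (range n).filter (· < m) = range m := by
    ext j; simp only [mem_filter, mem_range]; omega
  have := hmono.sum_mul_sum_le_card_mul_sum
  simpa only [mul_ite, mul_one, mul_zero, sum_ite, sum_const_zero, add_zero, sum_const,
    card_range, nsmul_eq_mul, hfilter, mul_comm (∑ j ∈ range n, a j)] using this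

theorem sum_range_mul_le (ha : Antitone a) (q r : ℕ) :
    ∑ j ∈ range (r * q), a j ≤ q * ∑ i ∈ range r, a (i * q) := by
  induction r with
  | zero => simp
  | succ r ih =>
    have hblock : ∑ l ∈ range q, a (r * q + l) ≤ q * a (r * q) := by
      simpa using sum_le_card_nsmul (range q) _ _ fun l _ => ha (Nat.le_add_right (r * q) l)
    rw [Nat.succ_mul, sum_range_add, sum_range_succ, mul_add]
    linarith

theorem sum_range_mul_pos (ha : Antitone a) {q r n : ℕ} (hq : 0 < q) (hr : 0 < r)
    (hrq : r * q ≤ n) (hpos : 0 < ∑ j ∈ range n, a j) :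
    0 < ∑ i ∈ range r, a (i * q) := by
  have hprefix := ha.mul_sum_range_le_mul_sum_range hrq
  have hrq0 : (0 : ℝ) < (r * q : ℕ) := by positivity
  have hn0 : (0 : ℝ) < n := hrq0.trans_le (by exact_mod_cast hrq)
  have hprefix_pos : 0 < ∑ j ∈ range (r * q), a j := by
    by_contra! h
    nlinarith [mul_pos hrq0 hpos]
  have : (0 : ℝ) < q * ∑ i ∈ range r, a (i * q) :=
    hprefix_pos.trans_le (ha.sum_range_mul_le q r)
  exact pos_of_mul_pos_right this (by positivity)

end Antitone

-- `a j` is the `(j+1)`-st largest value of `y`, and the smallest one for `j ≥ n`.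
theorem exists_antitone_profile {n : ℕ} (hn : 0 < n) (y : Fin n → ℝ) :
    ∃ a : ℕ → ℝ, Antitone a ∧ ∑ j ∈ range n, a j = ∑ v, y v ∧
      ∀ m < n, ∀ X : Finset (Fin n), #X ≤ m → ∃ u ∉ X, a m ≤ y u := by
  set σ := Tuple.sort (fun v => -y v)
  have hσ : Antitone (y ∘ σ) := fun i j hij => by
    simpa using Tuple.monotone_sort (fun v => -y v) hij
  have hclamp : ∀ j : ℕ, min j (n - 1) < n := fun j => by omega
  refine ⟨fun j => y (σ ⟨min j (n - 1), hclamp j⟩), fun i j hij => hσ (Fin.mk_le_mk.2 (by omega)), ?_, ?_⟩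
  · rw [← Fin.sum_univ_eq_sum_range, ← Equiv.sum_comp σ y]
    refine sum_congr rfl fun j _ => ?_
    congr 2; ext; exact min_eq_left (by omega)
  · intro m hm X hX
    have hcard : #X < #((Iic (⟨m, hm⟩ : Fin n)).map σ.toEmbedding) := by
      simp only [card_map, Fin.card_Iic]; omega
    obtain ⟨u, hu, huX⟩ := exists_mem_notMem_of_card_lt_card hcard
    obtain ⟨k, hk, rfl⟩ := mem_map.1 hu
    refine ⟨σ k, huX, hσ ?_⟩
    simp only [mem_Iic, Fin.le_def] at hk ⊢
    omega

section Digraph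

open Classical

variable {V : Type*} (G : V → V → Prop)

def CanExtend (B : Finset V) (v : V) (T : Finset V) (u : V) : Prop :=
  u ≠ v ∧ u ∉ B ∧ G v u ∧ ∀ w ∈ T, u ≠ w ∧ G w u ∧ G u w

variable [Fintype V]

noncomputable def nonOutNbrs (v : V) : Finset V := univ.filter fun w => ¬ G v w

noncomputable def nonInNbrs (u : V) : Finset V := univ.filter fun w => ¬ G w u

variable {G}

@[simp] theorem mem_nonOutNbrs {v w : V} : w ∈ nonOutNbrs G v ↔ ¬ G v w := by
  simp [nonOutNbrs]

@[simp] theorem mem_nonInNbrs {u w : V} : w ∈ nonInNbrs G u ↔ ¬ G w u := by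
  simp [nonInNbrs]

theorem ncard_setOf_add_card_nonOutNbrs (v : V) :
    Set.ncard {w | G v w} + #(nonOutNbrs G v) = Fintype.card V := by
  rw [Set.ncard_eq_toFinset_card', Set.toFinset_ofPred, nonOutNbrs,
    card_filter_add_card_filter_not, card_univ]

theorem sum_card_nonInNbrs : ∑ u, #(nonInNbrs G u) = ∑ v, #(nonOutNbrs G v) := by
  simp only [nonInNbrs, nonOutNbrs, card_filter]
  exact sum_comm

theorem card_filter_lt_card_nonInNbrs_mul_le {d : ℝ} (hd : ∀ v, (#(nonOutNbrs G v) : ℝ) ≤ d)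
    (t : ℝ) : #{u | t < #(nonInNbrs G u)} * t ≤ Fintype.card V * d := by
  calc #{u | t < #(nonInNbrs G u)} * t
      ≤ ∑ u ∈ {u | t < #(nonInNbrs G u)}, (#(nonInNbrs G u) : ℝ) := by
        rw [← nsmul_eq_mul]
        exact card_nsmul_le_sum _ _ _ fun u hu => (mem_filter.1 hu).2.le
    _ ≤ ∑ u, (#(nonInNbrs G u) : ℝ) := sum_le_sum_of_subset_of_nonneg (subset_univ _) (by simp)
    _ = ∑ v, (#(nonOutNbrs G v) : ℝ) := by exact_mod_cast sum_card_nonInNbrs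
    _ ≤ ∑ _v : V, d := sum_le_sum fun v _ => hd v
    _ = Fintype.card V * d := by simp

variable [DecidableEq V]

theorem card_filter_not_canExtend_le {B T : Finset V} {v : V} {dOut dIn : ℝ}
    (hOut : ∀ w, (#(nonOutNbrs G w) : ℝ) ≤ dOut) (hIn : ∀ w ∉ B, (#(nonInNbrs G w) : ℝ) ≤ dIn)
    (hTB : ∀ u ∈ T, u ∉ B) :
    (#{u | ¬ CanExtend G B v T u} : ℝ)
      ≤ 1 + #B + dOut + #T * (1 + dOut + dIn) := by
  set blocked : V → Finset V := fun w => insert w (nonOutNbrs G w ∪ nonInNbrs G w)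
  have hsub : ({u | ¬ CanExtend G B v T u} : Finset V) ⊆
      insert v (B ∪ nonOutNbrs G v ∪ T.biUnion blocked) := by
    intro u hu
    simp only [blocked, mem_insert, mem_union, mem_biUnion, mem_nonOutNbrs, mem_nonInNbrs]
    by_contra! h
    exact (mem_filter.1 hu).2 ⟨h.1, h.2.1.1, h.2.1.2, h.2.2⟩
  have hcard : #{u | ¬ CanExtend G B v T u} ≤
      #B + #(nonOutNbrs G v) + ∑ w ∈ T, #(blocked w) + 1 := by
    refine (card_le_card hsub).trans ((card_insert_le _ _).trans ?_)
    gcongr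
    exact (card_union_le _ _).trans (add_le_add (card_union_le _ _) card_biUnion_le)
  have hblocked : ∀ w ∈ T, (#(blocked w) : ℝ) ≤ 1 + dOut + dIn := by
    intro w hw
    have : #(blocked w) ≤ #(nonOutNbrs G w) + #(nonInNbrs G w) + 1 :=
      (card_insert_le _ _).trans (by gcongr; exact card_union_le _ _)
    have : (#(blocked w) : ℝ) ≤ #(nonOutNbrs G w) + #(nonInNbrs G w) + 1 := by exact_mod_cast this
    linarith [hOut w, hIn w (hTB w hw)]
  have hsum := sum_le_card_nsmul T _ _ hblocked
  rw [nsmul_eq_mul] at hsum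
  have hcard' : (#{u | ¬ CanExtend G B v T u} : ℝ) ≤
      #B + #(nonOutNbrs G v) + ∑ w ∈ T, (#(blocked w) : ℝ) + 1 := by
    exact_mod_cast hcard
  linarith [hOut v]

theorem exists_greedy_clique {B : Finset V} {v : V} {dOut dIn : ℝ}
    (hOut : ∀ w, (#(nonOutNbrs G w) : ℝ) ≤ dOut) (hIn : ∀ w ∉ B, (#(nonInNbrs G w) : ℝ) ≤ dIn)
    {y : V → ℝ} {a : ℕ → ℝ}
    (hpick : ∀ m < Fintype.card V, ∀ X : Finset V, #X ≤ m → ∃ u ∉ X, a m ≤ y u) (q : ℕ) :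
    ∀ k, k * q < Fintype.card V →
      (∀ i < k, 1 + #B + dOut + i * (1 + dOut + dIn) ≤ (i + 1) * q) →
      ∃ T : Finset V, #T = k ∧ v ∉ T ∧ (∀ u ∈ T, u ∉ B) ∧ (∀ u ∈ T, G v u) ∧
        (∀ u ∈ T, ∀ w ∈ T, u ≠ w → G u w) ∧ ∑ i ∈ range k, a ((i + 1) * q) ≤ ∑ u ∈ T, y u
  | 0, _, _ => ⟨∅, by simp⟩
  | k + 1, hkq, hroom => by
    obtain ⟨T, hTk, hvT, hTB, hdom, hTT, hTsum⟩ :=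
      exists_greedy_clique (v := v) hOut hIn hpick q k (lt_of_le_of_lt (by gcongr; omega) hkq)
        fun i hi => hroom i (by omega)
    have hX : (#{u | ¬ CanExtend G B v T u} : ℝ) ≤ (k + 1) * q :=
      (card_filter_not_canExtend_le hOut hIn hTB).trans (hTk ▸ hroom k k.lt_add_one)
    obtain ⟨u, hu, hau⟩ := hpick _ hkq _ (by exact_mod_cast hX)
    simp only [mem_filter_univ, not_not] at hu
    obtain ⟨huv, huB, hvu, huT⟩ := hu
    have huT' : u ∉ T := fun h => (huT u h).1 rfl
    refine ⟨insert u T, by rw [card_insert_of_notMem huT', hTk], ?_, ?_, ?_, ?_, ?_⟩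
    · simpa [Ne.symm huv] using hvT
    · simpa [huB] using hTB
    · simpa [hvu] using hdom
    · intro w₁ hw₁ w₂ hw₂ hne
      rcases mem_insert.1 hw₁ with h₁ | hw₁ <;> rcases mem_insert.1 hw₂ with h₂ | hw₂
      · exact absurd (h₁.trans h₂.symm) hne
      · exact h₁ ▸ (huT w₂ hw₂).2.2
      · exact h₂ ▸ (huT w₁ hw₁).2.1
      · exact hTT w₁ hw₁ w₂ hw₂ hne
    · rw [sum_range_succ, sum_insert huT']
      linarith

end Digraph

theorem isKrs_insert {n : ℕ} {G : Fin n → Fin n → Prop} {v : Fin n} {T : Finset (Fin n)}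
    (hvT : v ∉ T) (hv : ∀ u ∈ T, G v u) (hT : ∀ u ∈ T, ∀ w ∈ T, u ≠ w → G u w) :
    IsKrs G (#T + 1) (#T - 1) (insert v T) := by
  have hout : ∀ x ∈ insert v T, ∀ y ∈ T, x ≠ y → G x y := by
    intro x hx y hy hxy
    rcases mem_insert.1 hx with rfl | hx
    · exact hv y hy
    · exact hT x hx y hy hxy
  refine ⟨card_insert_of_notMem hvT, fun x hx y hy hxy => ?_, fun x hx => ?_⟩
  · rcases mem_insert.1 hy with rfl | hy
    · exact Or.inr (hv x ((mem_insert.1 hx).resolve_left hxy))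
    · exact Or.inl (hout x hx y hy hxy)
  · have hsub : (↑(T.erase x) : Set (Fin n)) ⊆ {y | y ∈ insert v T ∧ G x y} := fun y hy =>
      ⟨mem_insert_of_mem (mem_of_mem_erase hy),
        hout x hx y (mem_of_mem_erase hy) (ne_of_mem_erase hy).symm⟩
    calc #T - 1 ≤ #(T.erase x) := pred_card_le_card_erase
      _ ≤ _ := by rw [← Set.ncard_coe_finset]; exact Set.ncard_le_ncard hsub (Set.toFinite _)

theorem room_for_greedy_step {r n i : ℕ} {γ : ℝ} (hr : 5 ≤ r) (hγ : 0 < γ)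
    (hn : 2 * r ≤ γ * n) (hi : i + 2 ≤ r) :
    1 + (1 / ((2 * r - 3) * r) - γ) * n / (1 / (2 * r - 4)) + (1 / ((2 * r - 3) * r) - γ) * n
      + i * (1 + (1 / ((2 * r - 3) * r) - γ) * n + 1 / (2 * r - 4) * n)
      ≤ (i + 1) * (n / r : ℕ) := by
  have hR : (5 : ℝ) ≤ r := by exact_mod_cast hr
  have hiR : (i : ℝ) + 2 ≤ r := by exact_mod_cast hi
  have h3 : (0 : ℝ) < 2 * r - 3 := by linarith
  have h4 : (0 : ℝ) < 2 * r - 4 := by linarith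
  have hq : (n : ℝ) / r - 1 < (n / r : ℕ) := by
    have : (n : ℝ) < (n / r : ℕ) * r + r := by exact_mod_cast Nat.lt_div_mul_add (by omega)
    rw [div_sub_one (by positivity), div_lt_iff₀ (by positivity)]
    linarith
  have hfold : (1 / ((2 * r - 3) * r) - γ) * n / (1 / (2 * r - 4))
      + (1 / ((2 * r - 3) * r) - γ) * n = n / r - γ * (2 * r - 3) * n := by
    field_simp [h3.ne', h4.ne']
    ring
  have hεδ : 1 / ((2 * (r : ℝ) - 3) * r) + 1 / (2 * r - 4) ≤ 1 / r := by
    rw [div_add_div _ _ (by positivity) h4.ne', div_le_div_iff₀ (by positivity) (by positivity)]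
    nlinarith [mul_nonneg (mul_nonneg (sub_nonneg.2 hR) h3.le) (by linarith : (0 : ℝ) ≤ r)]
  have hεδn : (1 / ((2 * (r : ℝ) - 3) * r) + 1 / (2 * r - 4)) * n ≤ n / r :=
    (mul_le_mul_of_nonneg_right hεδ n.cast_nonneg).trans_eq (one_div_mul_eq_div _ _)
  have hi0 : (0 : ℝ) ≤ i := Nat.cast_nonneg i
  nlinarith [mul_le_mul_of_nonneg_left hεδn hi0,
    mul_lt_mul_of_pos_left hq (by linarith : (0 : ℝ) < i + 1),
    mul_nonneg hi0 (mul_nonneg hγ.le n.cast_nonneg)]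

theorem exists_isKrs_sum_pos {r n : ℕ} {γ : ℝ} (hr : 5 ≤ r) (hγ : 0 < γ)
    {G : Fin n → Fin n → Prop}
    (hdeg : ∀ v : Fin n, (1 - 1 / ((2 * (r : ℝ) - 3) * r) + γ) * n ≤ Set.ncard {w | G v w})
    (hnr : r ≤ n) (hnγ : 2 * (r : ℝ) ≤ γ * n) {y : Fin n → ℝ} (hy : 0 < ∑ v, y v) :
    ∃ S, IsKrs G r (r - 2) S ∧ 0 < ∑ v ∈ S, y v := by
  classical
  set ε : ℝ := 1 / ((2 * r - 3) * r) with hε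
  set δ : ℝ := 1 / (2 * r - 4) with hδ
  have hR : (5 : ℝ) ≤ r := by exact_mod_cast hr
  have hδ0 : 0 < δ := one_div_pos.2 (by linarith)
  have hn : (0 : ℝ) < n := by exact_mod_cast (by omega : 0 < n)
  obtain ⟨a, ha, hsum, hpick⟩ := exists_antitone_profile (by omega) y
  obtain ⟨v, -, hv⟩ := hpick 0 (by omega) ∅ (by simp)
  have hOut : ∀ w, (#(nonOutNbrs G w) : ℝ) ≤ (ε - γ) * n := fun w => by
    have := ncard_setOf_add_card_nonOutNbrs (G := G) w
    rw [Fintype.card_fin] at this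
    have : (Set.ncard {x | G w x} : ℝ) + #(nonOutNbrs G w) = n := by exact_mod_cast this
    linarith [hdeg w]
  set B : Finset (Fin n) := {u | δ * n < #(nonInNbrs G u)}
  have hB : (#B : ℝ) ≤ (ε - γ) * n / δ := by
    have := card_filter_lt_card_nonInNbrs_mul_le hOut (δ * n)
    rw [Fintype.card_fin] at this
    rw [le_div_iff₀ hδ0]
    nlinarith
  have hIn : ∀ w ∉ B, (#(nonInNbrs G w) : ℝ) ≤ δ * n := by simp [B]
  have hq : 0 < n / r := Nat.div_pos hnr (by omega)
  have hrq : r * (n / r) ≤ n := Nat.mul_div_le n r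
  obtain ⟨T, hTcard, hvT, -, hdom, hTT, hTsum⟩ :=
    exists_greedy_clique (v := v) hOut hIn (by simpa using hpick) (n / r) (r - 1)
      (by simpa using (Nat.mul_lt_mul_of_pos_right (by omega : r - 1 < r) hq).trans_le hrq)
      fun i hi => by
        have hroom := room_for_greedy_step (i := i) hr hγ hnγ (by omega)
        rw [← hε, ← hδ] at hroom
        linarith
  refine ⟨insert v T, ?_, ?_⟩
  · have := isKrs_insert hvT hdom hTT
    rwa [hTcard, Nat.sub_add_cancel (by omega), Nat.sub_sub] at this
  · calc 0 < ∑ i ∈ range r, a (i * (n / r)) := ha.sum_range_mul_pos hq (by omega) hrq (hsum ▸ hy)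
      _ = a 0 + ∑ i ∈ range (r - 1), a ((i + 1) * (n / r)) := by
        rw [← Nat.sub_add_cancel (by omega : 1 ≤ r), sum_range_succ']
        simp [add_comm]
      _ ≤ y v + ∑ u ∈ T, y u := add_le_add hv hTsum
      _ = ∑ u ∈ insert v T, y u := (sum_insert hvT).symm

section FractionalCover

variable {V : Type*}

noncomputable def indicatorVec (S : Finset V) : V → ℝ := Set.indicator ↑S 1

theorem indicatorVec_injective : Function.Injective (indicatorVec (V := V)) :=
  fun _ _ h => coe_inj.1 (Set.indicator_one_inj ℝ h)

variable [DecidableEq V]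

theorem indicatorVec_apply (S : Finset V) (v : V) :
    indicatorVec S v = if v ∈ S then 1 else 0 := by
  simp [indicatorVec, Set.indicator_apply]

variable [Fintype V]

theorem const_mem_convexHull_indicatorVec [Nonempty V] {𝒦 : Finset (Finset V)} {r : ℕ}
    (hr : 0 < r) (h𝒦 : ∀ S ∈ 𝒦, #S = r)
    (hz : ∀ z : V → ℝ, 0 < ∑ v, z v → ∃ S ∈ 𝒦, 0 ≤ ∑ v ∈ S, z v) :
    (fun _ => (r : ℝ) / Fintype.card V) ∈ convexHull ℝ (↑(𝒦.image indicatorVec) : Set (V → ℝ)) := by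
  by_contra hnot
  obtain ⟨f, u, hfp, hfK⟩ := geometric_hahn_banach_point_closed (convex_convexHull ℝ _)
    (((Set.toFinite _).isCompact_convexHull ℝ).isClosed) hnot
  set c : V → ℝ := fun v => f fun w => if v = w then 1 else 0
  have hf : ∀ x, f x = ∑ v, x v * c v := fun x => f.toLinearMap.pi_apply_eq_sum_univ x
  have hr' : (0 : ℝ) < r := by exact_mod_cast hr
  have hn : (0 : ℝ) < Fintype.card V := by exact_mod_cast Fintype.card_pos
  obtain ⟨S, hS, hSz⟩ := hz (fun v => u / r - c v) (by
    have : (r : ℝ) / Fintype.card V * ∑ v, c v < u := by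
      simpa [hf, ← Finset.mul_sum] using hfp
    rw [sum_sub_distrib, sum_const, card_univ, nsmul_eq_mul, sub_pos]
    rw [div_mul_eq_mul_div, div_lt_iff₀ hn] at this
    rw [mul_div_assoc', lt_div_iff₀ hr']
    linarith)
  have hfS := hfK _ (subset_convexHull ℝ _ (mem_coe.2 (mem_image_of_mem indicatorVec hS)))
  rw [hf] at hfS
  simp only [indicatorVec_apply, ite_mul, one_mul, zero_mul, sum_ite_mem, univ_inter] at hfS
  rw [sum_sub_distrib, sum_const, h𝒦 S hS, nsmul_eq_mul, mul_div_cancel₀ _ hr'.ne'] at hSz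
  linarith

theorem exists_perfect_fractional_cover [Nonempty V] {𝒦 : Finset (Finset V)} {r : ℕ}
    (hr : 0 < r) (h𝒦 : ∀ S ∈ 𝒦, #S = r)
    (hz : ∀ z : V → ℝ, 0 < ∑ v, z v → ∃ S ∈ 𝒦, 0 ≤ ∑ v ∈ S, z v) :
    ∃ ω : Finset V → ℝ, (∀ S, 0 ≤ ω S ∧ ω S ≤ 1) ∧ (∀ S, ω S ≠ 0 → S ∈ 𝒦) ∧
      ∀ v, ∑ S ∈ univ.filter (fun S => v ∈ S), ω S = 1 := by
  obtain ⟨w, hw0, -, hwp⟩ := mem_convexHull'.1 (const_mem_convexHull_indicatorVec hr h𝒦 hz)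
  set ω : Finset V → ℝ := fun S => if S ∈ 𝒦 then Fintype.card V / r * w (indicatorVec S) else 0
  have hω0 : ∀ S, 0 ≤ ω S := fun S => by
    by_cases hS : S ∈ 𝒦
    · simpa [ω, hS] using mul_nonneg (by positivity) (hw0 _ (mem_image_of_mem _ hS))
    · simp [ω, hS]
  have hcover : ∀ v, ∑ S ∈ univ.filter (fun S => v ∈ S), ω S = 1 := fun v => by
    have hv := congrFun hwp v
    rw [Finset.sum_apply, sum_image fun S _ T _ h => indicatorVec_injective h] at hv
    simp only [Pi.smul_apply, smul_eq_mul, indicatorVec_apply, mul_ite, mul_one, mul_zero] at hv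
    have hn : (0 : ℝ) < Fintype.card V := by exact_mod_cast Fintype.card_pos
    calc ∑ S ∈ univ.filter (fun S => v ∈ S), ω S
        = Fintype.card V / r * ∑ S ∈ 𝒦, if v ∈ S then w (indicatorVec S) else 0 := by
          rw [sum_filter, mul_sum, ← sum_subset (subset_univ 𝒦)]
          · refine sum_congr rfl fun S hS => ?_
            simp [ω, hS]
          · intro S _ hS
            simp [ω, hS]
      _ = 1 := by
          rw [hv]
          field_simp
  refine ⟨ω, fun S => ⟨hω0 S, ?_⟩, fun S hS => ?_, hcover⟩
  · by_cases hS : S ∈ 𝒦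
    · obtain ⟨v, hv⟩ := card_pos.1 ((h𝒦 S hS).symm ▸ hr)
      exact (hcover v) ▸ single_le_sum (fun T _ => hω0 T) (mem_filter.2 ⟨mem_univ S, hv⟩)
    · simp [ω, hS]
  · by_contra h
    exact hS (if_neg h)

end FractionalCover

/-- For `r ≥ 5` and `γ > 0`, every sufficiently large digraph with minimum out-degree
at least `(1 - 1/((2r-3)r) + γ)n` has a perfect fractional `(r, r-2)`-tiling. -/
theorem stmt_6 (r : ℕ) (γ : ℝ) (hr : 5 ≤ r) (hγ : 0 < γ) :
    ∃ n₀ : ℕ, ∀ n, n₀ ≤ n → ∀ G : Fin n → Fin n → Prop, (∀ v, ¬ G v v) →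
      (∀ v : Fin n, (1 - 1 / ((2 * (r : ℝ) - 3) * r) + γ) * n ≤ (Set.ncard {w | G v w} : ℝ)) →
      ∃ ω : Finset (Fin n) → ℝ,
        (∀ S, 0 ≤ ω S ∧ ω S ≤ 1) ∧
        (∀ S, ω S ≠ 0 → IsKrs G r (r - 2) S) ∧
        (∀ v : Fin n, ∑ S ∈ Finset.univ.filter (fun S => v ∈ S), ω S = 1) := by
  classical
  refine ⟨r + ⌈2 * r / γ⌉₊, fun n hn G _ hdeg => ?_⟩
  have hnγ : 2 * (r : ℝ) ≤ γ * n := by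
    have : 2 * (r : ℝ) / γ ≤ n :=
      (Nat.le_ceil _).trans (by exact_mod_cast (by omega : ⌈2 * (r : ℝ) / γ⌉₊ ≤ n))
    rw [div_le_iff₀ hγ] at this
    linarith
  have : Nonempty (Fin n) := ⟨⟨0, by omega⟩⟩
  obtain ⟨ω, hω, hK, hcover⟩ := exists_perfect_fractional_cover
    (𝒦 := univ.filter (IsKrs G r (r - 2))) (by omega) (fun S hS => (mem_filter.1 hS).2.1)
    fun z hz => by
      obtain ⟨S, hS, hSz⟩ := exists_isKrs_sum_pos hr hγ hdeg (by omega) hnγ hz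
      exact ⟨S, mem_filter.2 ⟨mem_univ S, hS⟩, hSz.le⟩
  exact ⟨ω, hω, fun S hS => (mem_filter.1 (hK S hS)).2, hcover⟩
end

section
/- Let G be a digraph on n vertices (n sufficiently large) in which every vertex has out-degree at least 5n/6. Then G contains a perfect fractional (3,1)-tiling: weights in [0,1] on the triples {x,y,z} with complete base graph and minimum internal out-degree at least 1, such that every vertex is covered with total weight exactly 1. -/
open Finset

section duality

variable {V : Type*} [Fintype V] {E : Finset (Finset V)} {k : ℕ}

lemma exists_cover_of_sum_neg (hk : 0 < k) (hE : ∀ S ∈ E, #S = k) {z : V → ℝ}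
    (hzE : ∀ S ∈ E, 0 ≤ ∑ v ∈ S, z v) (hz : ∑ v, z v < 0) :
    ∃ c : V → ℝ, (∀ v, 0 ≤ c v) ∧ (∀ S ∈ E, 1 ≤ ∑ v ∈ S, c v) ∧
      ∑ v, c v < Fintype.card V / k := by
  set m := ∑ v, |z v|
  have hm : 0 < m := by
    have : ∑ v, -z v ≤ m := sum_le_sum fun v _ => neg_le_abs (z v)
    rw [sum_neg_distrib] at this
    linarith
  have hzm : ∀ v, -z v ≤ m := fun v =>
    (neg_le_abs (z v)).trans (single_le_sum (fun w _ => abs_nonneg (z w)) (mem_univ v))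
  have hkm : (0 : ℝ) < k * m := by positivity
  have hsum : ∀ T : Finset V, ∑ v ∈ T, (z v + m) / (k * m) = (∑ v ∈ T, z v + #T * m) / (k * m) :=
    fun T => by rw [← sum_div, sum_add_distrib, sum_const, nsmul_eq_mul]
  refine ⟨fun v => (z v + m) / (k * m), fun v => div_nonneg (by linarith [hzm v]) hkm.le,
    fun S hS => ?_, ?_⟩
  · rw [hsum, hE S hS, le_div_iff₀ hkm]
    linarith [hzE S hS]
  · rw [hsum, card_univ, div_lt_div_iff₀ hkm (by positivity)]
    nlinarith

variable [DecidableEq V]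

lemma exists_cover_of_notMem_convexHull [Nonempty V] (hk : 0 < k) (hE : ∀ S ∈ E, #S = k)
    (hp : (fun _ => (k : ℝ) / Fintype.card V) ∉
      convexHull ℝ ((fun S : Finset V => (S : Set V).indicator (1 : V → ℝ)) '' E)) :
    ∃ c : V → ℝ, (∀ v, 0 ≤ c v) ∧ (∀ S ∈ E, 1 ≤ ∑ v ∈ S, c v) ∧
      ∑ v, c v < Fintype.card V / k := by
  obtain ⟨f, u, hfp, hfE⟩ := geometric_hahn_banach_point_closed (convex_convexHull ℝ _)
    ((E.finite_toSet.image _).isClosed_convexHull ℝ) hp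
  set y : V → ℝ := fun v => f fun j => if v = j then 1 else 0
  have hf : ∀ x, f x = ∑ v, x v * y v := fun x => by
    simpa [smul_eq_mul] using f.toLinearMap.pi_apply_eq_sum_univ x
  have hN : (0 : ℝ) < Fintype.card V := by exact_mod_cast Fintype.card_pos
  have hk' : (0 : ℝ) < k := by exact_mod_cast hk
  refine exists_cover_of_sum_neg (z := fun v => y v - u / k) hk hE (fun S hS => ?_) ?_
  · have hS' := hfE _ (subset_convexHull ℝ _ (Set.mem_image_of_mem _ hS))
    simp only [hf, Set.indicator_apply, mem_coe, Pi.one_apply, ite_mul, one_mul, zero_mul,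
      sum_ite_mem, univ_inter] at hS'
    rw [sum_sub_distrib, sum_const, hE S hS, nsmul_eq_mul, mul_div_cancel₀ _ hk'.ne']
    linarith
  · have hfp' : k / Fintype.card V * ∑ v, y v < u := by
      rw [mul_sum]; simpa [hf] using hfp
    rw [div_mul_eq_mul_div, div_lt_iff₀ hN] at hfp'
    rw [sum_sub_distrib, sum_const, card_univ, nsmul_eq_mul, sub_neg, ← mul_div_assoc,
      lt_div_iff₀ hk']
    linarith

lemma exists_tiling_of_mem_convexHull [Nonempty V] (hk : 0 < k)
    (hp : (fun _ => (k : ℝ) / Fintype.card V) ∈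
      convexHull ℝ ((fun S : Finset V => (S : Set V).indicator (1 : V → ℝ)) '' E)) :
    ∃ ω : Finset V → ℝ, (∀ S, 0 ≤ ω S) ∧ (∀ S ∉ E, ω S = 0) ∧
      ∀ v, ∑ S ∈ univ.filter (fun S => v ∈ S), ω S = 1 := by
  set ind : Finset V → V → ℝ := fun S => (S : Set V).indicator 1
  rw [← coe_image] at hp
  obtain ⟨w, hw0, -, hwp⟩ := Finset.mem_convexHull'.mp hp
  rw [sum_image fun S _ S' _ h => coe_inj.mp (Set.indicator_one_inj ℝ h)] at hwp
  set ω : Finset V → ℝ := fun S => if S ∈ E then Fintype.card V / k * w (ind S) else 0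
  refine ⟨ω, fun S => ?_, fun S hS => if_neg hS, fun v => ?_⟩
  · by_cases hS : S ∈ E
    · simpa [ω, hS] using mul_nonneg (by positivity) (hw0 _ (mem_image_of_mem _ hS))
    · simp [ω, hS]
  calc ∑ S ∈ univ.filter (fun S => v ∈ S), ω S = ∑ S ∈ E, ω S * ind S v := by
        rw [sum_filter, ← sum_subset (subset_univ E) fun S _ hS => by simp [ω, hS]]
        exact sum_congr rfl fun S _ => by by_cases hv : v ∈ S <;> simp [ind, hv]
    _ = Fintype.card V / k * (k / Fintype.card V) := by
        rw [← congrFun hwp v, Finset.sum_apply, mul_sum]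
        exact sum_congr rfl fun S hS => by simp [ω, ind, hS, mul_assoc]
    _ = 1 := by field_simp

theorem exists_perfect_fractional_tiling (hk : 0 < k) (hE : ∀ S ∈ E, #S = k)
    (hcover : ∀ c : V → ℝ, (∀ v, 0 ≤ c v) → (∀ S ∈ E, 1 ≤ ∑ v ∈ S, c v) →
      (Fintype.card V : ℝ) / k ≤ ∑ v, c v) :
    ∃ ω : Finset V → ℝ, (∀ S, 0 ≤ ω S) ∧ (∀ S ∉ E, ω S = 0) ∧
      ∀ v, ∑ S ∈ univ.filter (fun S => v ∈ S), ω S = 1 := by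
  rcases isEmpty_or_nonempty V with hV | hV
  · exact ⟨0, fun _ => le_rfl, fun _ _ => rfl, fun v => isEmptyElim v⟩
  by_cases hp : (fun _ => (k : ℝ) / Fintype.card V) ∈
      convexHull ℝ ((fun S : Finset V => (S : Set V).indicator (1 : V → ℝ)) '' E)
  · exact exists_tiling_of_mem_convexHull hk hp
  · obtain ⟨c, hc0, hcE, hcsum⟩ := exists_cover_of_notMem_convexHull hk hE hp
    exact absurd (hcover c hc0 hcE) (not_le.mpr hcsum)

lemma le_one_of_sum_filter_mem_eq_one {ω : Finset V → ℝ} (hω0 : ∀ S, 0 ≤ ω S)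
    (hω : ∀ v, ∑ S ∈ univ.filter (fun S => v ∈ S), ω S = 1) {S : Finset V} (hS : S.Nonempty) :
    ω S ≤ 1 := by
  obtain ⟨v, hv⟩ := hS
  calc ω S ≤ ∑ S' ∈ univ.filter (fun S' => v ∈ S'), ω S' :=
        single_le_sum (fun S' _ => hω0 S') (mem_filter.mpr ⟨mem_univ S, hv⟩)
    _ = 1 := hω v

end duality

lemma mul_le_sum_Ico {T : ℕ → ℝ} {a b : ℕ} {m : ℝ} (h : ∀ j ∈ Ico a b, m ≤ T j) :
    ((b - a : ℕ) : ℝ) * m ≤ ∑ j ∈ Ico a b, T j := by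
  simpa using card_nsmul_le_sum _ _ _ h

lemma div_three_le_block_bound {n q t B : ℝ} (hq : 0 ≤ q) (hqn : 6 * q ≤ n) (ht : 1 ≤ 3 * t)
    (hB0 : 0 ≤ B) (hB : (q + 1) * (1 - 2 * t) ≤ B) :
    n / 3 ≤ B + (q - 1) + (n + 2 - 4 * q) * t := by
  rcases le_or_gt t (1 / 2) with ht2 | ht2
  · nlinarith [mul_nonneg (sub_nonneg.mpr hqn) (show 0 ≤ 3 * t - 1 by linarith)]
  · nlinarith [mul_nonneg (show 0 ≤ n + 2 - 4 * q by linarith) (show 0 ≤ 2 * t - 1 by linarith)]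

lemma div_three_le_sum_range_of_sorted {n q : ℕ} {T : ℕ → ℝ} (hq : 0 < q) (hqn : 6 * q ≤ n)
    (hmono : MonotoneOn T (Set.Iio n)) (hnonneg : ∀ j < n, 0 ≤ T j)
    (hapex : ∀ j < n, 1 ≤ T j + 2 * T (3 * q - 1))
    (hcycle : ∀ k < q - 1, 1 ≤ T (q + 1 + k) + T (2 * q + k) + T (n - q)) :
    (n : ℝ) / 3 ≤ ∑ j ∈ range n, T j := by
  set t := T (3 * q - 1)
  set f := T (n - q)
  have hle : ∀ {i j}, i ≤ j → j < n → T i ≤ T j := fun {i j} hij hj =>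
    hmono (show i < n by omega) (show j < n from hj) hij
  have ht : 1 ≤ 3 * t := by linarith [hapex (3 * q - 1) (by omega)]
  have hsplit : ∑ j ∈ range n, T j = ∑ j ∈ Ico 0 (q + 1), T j
      + (∑ j ∈ Ico (q + 1) (2 * q), T j + ∑ j ∈ Ico (2 * q) (3 * q - 1), T j)
      + ∑ j ∈ Ico (3 * q - 1) (n - q + 1), T j + ∑ j ∈ Ico (n - q + 1) n, T j := by
    rw [range_eq_Ico, ← sum_Ico_consecutive T (show 0 ≤ q + 1 by omega),
      ← sum_Ico_consecutive T (show q + 1 ≤ 2 * q by omega),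
      ← sum_Ico_consecutive T (show 2 * q ≤ 3 * q - 1 by omega),
      ← sum_Ico_consecutive T (show 3 * q - 1 ≤ n - q + 1 by omega)] <;> first | omega | ring
  have hlow_nonneg : 0 ≤ ∑ j ∈ Ico 0 (q + 1), T j :=
    sum_nonneg fun j hj => hnonneg j (by simp at hj; omega)
  have hlow : ((q + 1 : ℕ) : ℝ) * (1 - 2 * t) ≤ ∑ j ∈ Ico 0 (q + 1), T j := by
    simpa using mul_le_sum_Ico (a := 0) (b := q + 1) fun j hj => by
      simp only [mem_Ico] at hj; linarith [hapex j (by omega)]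
  have hpaired : ((q - 1 : ℕ) : ℝ) * (1 - f) ≤
      ∑ j ∈ Ico (q + 1) (2 * q), T j + ∑ j ∈ Ico (2 * q) (3 * q - 1), T j := by
    rw [sum_Ico_eq_sum_range, sum_Ico_eq_sum_range, show 2 * q - (q + 1) = q - 1 by omega,
      show 3 * q - 1 - 2 * q = q - 1 by omega, ← sum_add_distrib]
    simpa using card_nsmul_le_sum (range (q - 1)) (fun k => T (q + 1 + k) + T (2 * q + k))
      (1 - f) fun k hk => by simp only [mem_range] at hk; linarith [hcycle k hk]
  have hmid : ((n - q + 1 - (3 * q - 1) : ℕ) : ℝ) * t ≤ ∑ j ∈ Ico (3 * q - 1) (n - q + 1), T j :=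
    mul_le_sum_Ico fun j hj => by simp only [mem_Ico] at hj; exact hle hj.1 (by omega)
  have htop : ((n - (n - q + 1) : ℕ) : ℝ) * f ≤ ∑ j ∈ Ico (n - q + 1) n, T j :=
    mul_le_sum_Ico fun j hj => by simp only [mem_Ico] at hj; exact hle (by omega) hj.2
  rw [show n - q + 1 - (3 * q - 1) = n + 2 - 4 * q by omega] at hmid
  rw [show n - (n - q + 1) = q - 1 by omega] at htop
  push_cast [Nat.cast_sub (show 1 ≤ q by omega), Nat.cast_sub (show 4 * q ≤ n + 2 by omega)]
    at hlow hpaired hmid htop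
  have := div_three_le_block_bound (by positivity)
    (show (6 * q : ℝ) ≤ n by exact_mod_cast hqn) ht hlow_nonneg hlow
  linarith

section sorted

variable {n : ℕ} (c : Fin n → ℝ)

noncomputable def sortedValue (j : ℕ) : ℝ :=
  if h : j < n then c (Tuple.sort c ⟨j, h⟩) else 0

lemma sortedValue_of_lt {j : ℕ} (h : j < n) : sortedValue c j = c (Tuple.sort c ⟨j, h⟩) :=
  dif_pos h

lemma monotoneOn_sortedValue : MonotoneOn (sortedValue c) (Set.Iio n) := fun i hi j hj hij => by
  rw [sortedValue_of_lt c hi, sortedValue_of_lt c hj]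
  exact Tuple.monotone_sort c (show (⟨i, hi⟩ : Fin n) ≤ ⟨j, hj⟩ from hij)

lemma sum_range_sortedValue : ∑ j ∈ range n, sortedValue c j = ∑ v, c v := by
  rw [← Fin.sum_univ_eq_sum_range]
  simp only [sortedValue_of_lt c (Fin.is_lt _), Fin.eta]
  exact Equiv.sum_comp (Tuple.sort c) c

lemma exists_card_eq_forall_le_sortedValue {k : ℕ} (hk : k < n) :
    ∃ B : Finset (Fin n), #B = k + 1 ∧ ∀ v ∈ B, c v ≤ sortedValue c k := by
  refine ⟨(Iic ⟨k, hk⟩).map (Tuple.sort c).toEmbedding, by simp, ?_⟩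
  simp only [mem_map_equiv, mem_Iic, sortedValue_of_lt c hk]
  intro v hv
  simpa using Tuple.monotone_sort c hv

end sorted

lemma ne_of_adj {α : Type*} {G : α → α → Prop} (hirr : ∀ v, ¬ G v v) {u w : α} (h : G u w) :
    u ≠ w :=
  fun e => hirr u (e ▸ h)

namespace IsKrs

variable {n : ℕ} {G : Fin n → Fin n → Prop}

lemma of_out_nonempty {S : Finset (Fin n)} (hcard : #S = 3)
    (hadj : ∀ x ∈ S, ∀ y ∈ S, x ≠ y → G x y ∨ G y x) (hdeg : ∀ x ∈ S, ∃ y ∈ S, G x y) :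
    IsKrs G 3 1 S := by
  refine ⟨hcard, hadj, fun x hx => ?_⟩
  obtain ⟨y, hy, hxy⟩ := hdeg x hx
  exact (Set.ncard_pos (Set.toFinite _)).mpr ⟨y, hy, hxy⟩

variable (hirr : ∀ v, ¬ G v v)
include hirr

lemma of_cycle {a b c : Fin n} (hab : G a b) (hbc : G b c) (hca : G c a) :
    IsKrs G 3 1 {a, b, c} := by
  refine of_out_nonempty (card_eq_three.mpr ⟨a, b, c, ne_of_adj hirr hab,
    (ne_of_adj hirr hca).symm, ne_of_adj hirr hbc, rfl⟩) ?_ ?_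
  · simp only [mem_insert, mem_singleton]
    rintro x (rfl | rfl | rfl) y (rfl | rfl | rfl) hxy <;> tauto
  · simp only [mem_insert, mem_singleton]
    rintro x (rfl | rfl | rfl)
    exacts [⟨b, by simp, hab⟩, ⟨c, by simp, hbc⟩, ⟨a, by simp, hca⟩]

lemma of_apex {a x y : Fin n} (hax : G a x) (hay : G a y) (hxy : G x y) (hyx : G y x) :
    IsKrs G 3 1 {a, x, y} := by
  refine of_out_nonempty (card_eq_three.mpr ⟨a, x, y, ne_of_adj hirr hax, ne_of_adj hirr hay,
    ne_of_adj hirr hxy, rfl⟩) ?_ ?_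
  · simp only [mem_insert, mem_singleton]
    rintro u (rfl | rfl | rfl) w (rfl | rfl | rfl) huw <;> tauto
  · simp only [mem_insert, mem_singleton]
    rintro u (rfl | rfl | rfl)
    exacts [⟨x, by simp, hax⟩, ⟨y, by simp, hxy⟩, ⟨x, by simp, hyx⟩]

end IsKrs

lemma card_filter_add_self_le_of_asymm {α : Type*} [DecidableEq α] {r : α → α → Prop}
    [DecidableRel r] {X : Finset α} (hirr : ∀ x, ¬ r x x)
    (hasymm : ∀ x ∈ X, ∀ y ∈ X, r x y → ¬ r y x) :
    #((X ×ˢ X).filter fun p => r p.1 p.2) + #((X ×ˢ X).filter fun p => r p.1 p.2) ≤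
      #X * #X - #X := by
  set A := (X ×ˢ X).filter fun p => r p.1 p.2
  have hdisj : Disjoint A (A.image Prod.swap) := by
    simp only [disjoint_left, mem_image, mem_filter, mem_product, A]
    rintro ⟨x, y⟩ ⟨⟨hx, hy⟩, hxy⟩ ⟨⟨y', x'⟩, ⟨-, hyx⟩, h⟩
    simp only [Prod.swap_prod_mk, Prod.mk.injEq] at h
    obtain ⟨rfl, rfl⟩ := h
    exact hasymm _ hx _ hy hxy hyx
  have hA : A ⊆ X.offDiag := fun p hp => by
    simp only [mem_filter, mem_product, A] at hp
    obtain ⟨⟨hx, hy⟩, hr⟩ := hp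
    exact mem_offDiag.mpr ⟨hx, hy, fun e => hirr p.1 (by rwa [← e] at hr)⟩
  have hswap : A.image Prod.swap ⊆ X.offDiag := by
    simp only [subset_iff, mem_image]
    rintro _ ⟨p, hp, rfl⟩
    obtain ⟨hx, hy, hne⟩ := mem_offDiag.mp (hA hp)
    exact mem_offDiag.mpr ⟨hy, hx, hne.symm⟩
  calc #A + #A = #(A ∪ A.image Prod.swap) := by
        rw [card_union_of_disjoint hdisj, card_image_of_injective A Prod.swap_injective]
    _ ≤ #X.offDiag := card_le_card (union_subset hA hswap)
    _ = #X * #X - #X := offDiag_card X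

section nonNeighbours

open scoped Classical

variable {n q : ℕ} {G : Fin n → Fin n → Prop} (hout : ∀ v, #{w | ¬ G v w} ≤ q)
include hout

lemma card_sub_le_card_filter (u : Fin n) (X : Finset (Fin n)) :
    #X - q ≤ #(X.filter (G u)) := by
  have := card_le_card (filter_subset_filter (fun w => ¬ G u w) (subset_univ X))
  have := card_filter_add_card_filter_not (s := X) (G u)
  have := hout u
  omega

lemma exists_mutual_pair (hirr : ∀ v, ¬ G v v) (hq : 0 < q) {X : Finset (Fin n)}
    (hX : 2 * q ≤ #X) : ∃ x ∈ X, ∃ y ∈ X, G x y ∧ G y x := by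
  by_contra! hno
  set A := (X ×ˢ X).filter (fun p => G p.1 p.2)
  have hupper : #A + #A ≤ #X * #X - #X := card_filter_add_self_le_of_asymm hirr hno
  have hlower : #X * (#X - q) ≤ #A := by
    calc #X * (#X - q) ≤ ∑ x ∈ X, #(X.filter (G x)) := by
          simpa using card_nsmul_le_sum X _ _ fun x _ => card_sub_le_card_filter hout x X
      _ = #A := by rw [card_filter, sum_product]; simp only [card_filter]
  obtain ⟨r, hr⟩ : ∃ r, #X = q + r := ⟨#X - q, by omega⟩
  rw [hr, Nat.add_sub_cancel_left] at hlower
  rw [hr] at hupper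
  have := Nat.sub_add_cancel (Nat.le_mul_self (q + r))
  nlinarith

lemma exists_apex_pair (hirr : ∀ v, ¬ G v v) (hq : 0 < q) {a : Fin n} {X : Finset (Fin n)}
    (ha : a ∉ X) (hX : 3 * q ≤ #X + 1) : ∃ x ∈ X, ∃ y ∈ X, G a x ∧ G a y ∧ G x y ∧ G y x := by
  have hnon : #(X.filter (¬ G a ·)) + 1 ≤ q := by
    calc #(X.filter (¬ G a ·)) + 1 = #(insert a (X.filter (¬ G a ·))) := by
          rw [card_insert_of_notMem (fun h => ha (mem_filter.mp h).1)]
      _ ≤ #{w | ¬ G a w} := card_le_card (by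
          intro w hw
          rcases mem_insert.mp hw with rfl | hw
          · simpa using hirr w
          · simpa using (mem_filter.mp hw).2)
      _ ≤ q := hout a
  have hsplit := card_filter_add_card_filter_not (s := X) (G a)
  obtain ⟨x, hx, y, hy, hxy, hyx⟩ :=
    exists_mutual_pair hout hirr hq (X := X.filter (G a)) (by omega)
  rw [mem_filter] at hx hy
  exact ⟨x, hx.1, y, hy.1, hx.2, hy.2, hxy, hyx⟩

lemma exists_mem_two_mul_le_indegree (hq : 0 < q) (hqn : 6 * q ≤ n) {Y : Finset (Fin n)}
    (hY : 2 * q ≤ #Y) : ∃ y ∈ Y, 2 * q ≤ #{u | G u y} := by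
  by_contra! hlow
  have hdouble : ∑ u, #(Y.filter (G u)) = ∑ y ∈ Y, #{u | G u y} :=
    sum_card_bipartiteAbove_eq_sum_card_bipartiteBelow G
  have hlower : n * (#Y - q) ≤ ∑ u, #(Y.filter (G u)) := by
    simpa using card_nsmul_le_sum univ _ _ fun u _ => card_sub_le_card_filter hout u Y
  have hupper : ∑ y ∈ Y, #{u | G u y} < #Y * (2 * q) := by
    simpa using sum_lt_sum_of_nonempty (card_pos.mp (by omega)) hlow
  obtain ⟨r, hr⟩ : ∃ r, #Y = q + r := ⟨#Y - q, by omega⟩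
  rw [hr, Nat.add_sub_cancel_left] at hlower
  rw [hr] at hupper
  nlinarith

lemma exists_directed_triangle (hq : 0 < q) (hqn : 6 * q ≤ n) {L L' Z : Finset (Fin n)}
    (hL : q < #L) (hL' : 2 * q ≤ #L') (hZ : n < #Z + q) :
    ∃ x ∈ L, ∃ y ∈ L', ∃ z ∈ Z, G y x ∧ G x z ∧ G z y := by
  obtain ⟨y, hy, hin⟩ := exists_mem_two_mul_le_indegree hout hq hqn hL'
  obtain ⟨x, hx, hyx⟩ : ∃ x ∈ L, G y x := by
    by_contra! h
    have := card_le_card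
      (show L ⊆ ({w | ¬ G y w} : Finset (Fin n)) from fun x hx => by simpa using h x hx)
    have := hout y
    omega
  -- `y` has at least `2q` in-neighbours, at most `q` of which are not out-neighbours of `x`
  -- and fewer than `q` of which lie outside `Z`.
  obtain ⟨z, hz, hxz, hzy⟩ : ∃ z ∈ Z, G x z ∧ G z y := by
    by_contra! h
    have hsub : ({u | G u y} : Finset (Fin n)) ⊆ ({w | ¬ G x w} : Finset (Fin n)) ∪ Zᶜ :=
        fun u hu => by
      by_cases huZ : u ∈ Z
      · simpa using Or.inl fun hxu => h u huZ hxu (by simpa using hu)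
      · simpa using Or.inr huZ
    have hcard := (card_le_card hsub).trans (card_union_le _ _)
    rw [card_compl, Fintype.card_fin] at hcard
    have := hout x
    omega
  exact ⟨x, hx, y, hy, z, hz, hyx, hxz, hzy⟩

end nonNeighbours

section cover

open scoped Classical

variable {n q : ℕ} {G : Fin n → Fin n → Prop} (hirr : ∀ v, ¬ G v v) {c : Fin n → ℝ}
  (hc : ∀ S, IsKrs G 3 1 S → 1 ≤ ∑ v ∈ S, c v)
include hirr hc

lemma one_le_add_of_cycle {a b z : Fin n} (hab : G a b) (hbz : G b z) (hza : G z a) :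
    1 ≤ c a + c b + c z := by
  have h := hc _ (IsKrs.of_cycle hirr hab hbz hza)
  rwa [sum_insert (by simp [ne_of_adj hirr hab, (ne_of_adj hirr hza).symm]),
    sum_insert (by simp [ne_of_adj hirr hbz]), sum_singleton, ← add_assoc] at h

lemma one_le_add_of_apex {a x y : Fin n} (hax : G a x) (hay : G a y) (hxy : G x y)
    (hyx : G y x) : 1 ≤ c a + c x + c y := by
  have h := hc _ (IsKrs.of_apex hirr hax hay hxy hyx)
  rwa [sum_insert (by simp [ne_of_adj hirr hax, ne_of_adj hirr hay]),
    sum_insert (by simp [ne_of_adj hirr hxy]), sum_singleton, ← add_assoc] at h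

theorem div_three_le_sum_of_isKrs_cover (hout : ∀ v, #{w | ¬ G v w} ≤ q) (hq : 0 < q)
    (hqn : 6 * q ≤ n) (hc0 : ∀ v, 0 ≤ c v) : (n : ℝ) / 3 ≤ ∑ v, c v := by
  rw [← sum_range_sortedValue c]
  refine div_three_le_sum_range_of_sorted hq hqn (monotoneOn_sortedValue c)
    (fun j hj => by rw [sortedValue_of_lt c hj]; exact hc0 _) (fun j hj => ?_) (fun k hk => ?_)
  · obtain ⟨B, hB, hBle⟩ := exists_card_eq_forall_le_sortedValue c (k := 3 * q - 1) (by omega)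
    set a := Tuple.sort c ⟨j, hj⟩
    obtain ⟨x, hx, y, hy, hax, hay, hxy, hyx⟩ := exists_apex_pair hout hirr hq
      (notMem_erase a B) (by have := pred_card_le_card_erase (a := a) (s := B); omega)
    rw [sortedValue_of_lt c hj]
    linarith [one_le_add_of_apex hirr hc hax hay hxy hyx, hBle x (mem_of_mem_erase hx),
      hBle y (mem_of_mem_erase hy)]
  · obtain ⟨L, hL, hLle⟩ := exists_card_eq_forall_le_sortedValue c (k := q + 1 + k) (by omega)
    obtain ⟨L', hL', hL'le⟩ := exists_card_eq_forall_le_sortedValue c (k := 2 * q + k) (by omega)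
    obtain ⟨Z, hZ, hZle⟩ := exists_card_eq_forall_le_sortedValue c (k := n - q) (by omega)
    obtain ⟨x, hx, y, hy, z, hz, hyx, hxz, hzy⟩ :=
      exists_directed_triangle hout hq hqn (L := L) (L' := L') (Z := Z) (by omega) (by omega)
        (by omega)
    linarith [one_le_add_of_cycle hirr hc hyx hxz hzy, hLle x hx, hL'le y hy, hZle z hz]

end cover

open scoped Classical in
lemma card_filter_not_le_div_six {n : ℕ} {G : Fin n → Fin n → Prop} {v : Fin n}
    (h : 5 * (n : ℝ) / 6 ≤ (Set.ncard {w | G v w} : ℝ)) : #{w | ¬ G v w} ≤ n / 6 := by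
  have hsplit : #{w | G v w} + #{w | ¬ G v w} = n := by
    simpa using card_filter_add_card_filter_not (s := univ) (G v)
  have hncard : Set.ncard {w | G v w} = #{w | G v w} := by
    rw [← Set.ncard_coe_finset]; congr; ext; simp
  rw [hncard] at h
  have hreal : ((#{w | G v w} : ℕ) : ℝ) + #{w | ¬ G v w} = n := by exact_mod_cast hsplit
  rw [Nat.le_div_iff_mul_le (by norm_num)]
  exact_mod_cast (show (#{w | ¬ G v w} * 6 : ℝ) ≤ n by linarith)

/-- Every sufficiently large digraph with minimum out-degree at least `5n/6` has a
perfect fractional `(3,1)`-tiling. -/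
theorem stmt_8 :
    ∃ n₀ : ℕ, ∀ n, n₀ ≤ n → ∀ G : Fin n → Fin n → Prop, (∀ v, ¬ G v v) →
      (∀ v : Fin n, 5 * (n : ℝ) / 6 ≤ (Set.ncard {w | G v w} : ℝ)) →
      ∃ ω : Finset (Fin n) → ℝ,
        (∀ S, 0 ≤ ω S ∧ ω S ≤ 1) ∧
        (∀ S, ω S ≠ 0 → IsKrs G 3 1 S) ∧
        (∀ v : Fin n, ∑ S ∈ Finset.univ.filter (fun S => v ∈ S), ω S = 1) := by
  refine ⟨6, fun n hn G hirr hdeg => ?_⟩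
  classical
  obtain ⟨ω, hω0, hωE, hωcov⟩ := exists_perfect_fractional_tiling
    (E := univ.filter (IsKrs G 3 1)) three_pos (fun S hS => (mem_filter.mp hS).2.1)
    fun c hc0 hcE => by
      simpa using div_three_le_sum_of_isKrs_cover hirr
        (fun S hS => hcE S (mem_filter.mpr ⟨mem_univ S, hS⟩))
        (fun v => card_filter_not_le_div_six (hdeg v)) (by omega) (by omega) hc0
  have hωK : ∀ S, ω S ≠ 0 → IsKrs G 3 1 S := fun S hS => by
    by_contra h
    exact hS (hωE S (by simpa using h))
  refine ⟨ω, fun S => ⟨hω0 S, ?_⟩, hωK, hωcov⟩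
  by_cases hS : ω S = 0
  · simp [hS]
  exact le_one_of_sum_filter_mem_eq_one hω0 hωcov
    (card_pos.mp (show 0 < #S by rw [(hωK S hS).1]; norm_num))
end

section
/- Let G be a digraph on n vertices with minimum out-degree δn, let X ⊆ V(G), and let z ∈ V(G) be a vertex with at least 2(1−δ)n out-neighbours inside X. Then there exist two vertices u, v in the out-neighbourhood of z within X such that both directed edges uv and vu are present in G; consequently {z, u, v} has complete base graph and every vertex of it has out-degree at least 1 within {z,u,v}. -/
/-!
Let `N` be the set of out-neighbours of `z` in `X`, with `|N| = m ≥ 2(1-δ)n`, and suppose no two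
vertices of `N` span a double edge. Any two vertices of `N` then carry at most one of the
edges `uv`, `vu`, so the out-degrees inside `N` sum to less than `m²/2` and some `u ∈ N` has
fewer than `m/2` out-neighbours in `N`. Since `u` has at most `n - m` out-neighbours outside `N`,
this gives `δn < m/2 + n - m`, i.e. `m < 2(1-δ)n`.
-/

open Finset

section AsymmRel

variable {α : Type*} {r : α → α → Prop} [DecidableRel r] {s : Finset α}

theorem two_mul_sum_card_filter_add_card_le (hr : ∀ u ∈ s, ∀ v ∈ s, r u v → ¬ r v u) :
    2 * ∑ u ∈ s, #{v ∈ s | r u v} + #s ≤ #s * #s := by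
  classical
  have hpair : ∀ u ∈ s, ∀ v ∈ s,
      (if r u v then 1 else 0) + (if r v u then 1 else 0) + (if u = v then 1 else 0) ≤ 1 := by
    intro u hu v hv
    have := hr u hu v hv
    have := hr v hv u hu
    split_ifs <;> simp_all
  calc 2 * ∑ u ∈ s, #{v ∈ s | r u v} + #s
      = ∑ u ∈ s, ∑ v ∈ s,
          ((if r u v then 1 else 0) + (if r v u then 1 else 0) + (if u = v then 1 else 0)) := by
        simp only [sum_add_distrib, card_filter, sum_ite_eq, two_mul]
        rw [sum_comm (f := fun u v => if r v u then 1 else 0)]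
        simp
    _ ≤ ∑ _u ∈ s, ∑ _v ∈ s, 1 := sum_le_sum fun u hu => sum_le_sum fun v hv => hpair u hu v hv
    _ = #s * #s := by simp

theorem exists_two_mul_card_filter_lt (hr : ∀ u ∈ s, ∀ v ∈ s, r u v → ¬ r v u)
    (hs : s.Nonempty) : ∃ u ∈ s, 2 * #{v ∈ s | r u v} < #s := by
  have hsum : ∑ u ∈ s, (2 * #{v ∈ s | r u v} + 1) ≤ ∑ _u ∈ s, #s := by
    simpa [sum_add_distrib, ← mul_sum] using two_mul_sum_card_filter_add_card_le hr
  exact exists_le_of_sum_le hs hsum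

end AsymmRel

theorem card_filter_univ_add_card_le {α : Type*} [Fintype α] [DecidableEq α] (p : α → Prop)
    [DecidablePred p] (s : Finset α) :
    #{v | p v} + #s ≤ #{v ∈ s | p v} + Fintype.card α := by
  have hsub : ({v | p v} : Finset α) ⊆ {v ∈ s | p v} ∪ sᶜ := by
    intro v hv
    by_cases hvs : v ∈ s <;> simp_all
  have := (card_le_card hsub).trans (card_union_le _ _)
  have := card_add_card_compl s
  omega

/-- If `δ⁺(G) ≥ δn` and `z` has at least `2(1-δ)n` out-neighbours inside `X`, then two
of these out-neighbours are joined by a double edge, yielding a `K_{3,1}` triple. -/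
theorem stmt_12 (n : ℕ) (δ : ℝ) (G : Fin n → Fin n → Prop) (hirr : ∀ v, ¬ G v v)
    (hdeg : ∀ v : Fin n, δ * n ≤ (Set.ncard {w | G v w} : ℝ))
    (X : Set (Fin n)) (z : Fin n)
    (hz : 2 * (1 - δ) * n ≤ (Set.ncard {w | w ∈ X ∧ G z w} : ℝ)) :
    ∃ u v : Fin n, u ∈ X ∧ v ∈ X ∧ G z u ∧ G z v ∧ u ≠ v ∧ G u v ∧ G v u := by
  classical
  by_contra hno
  set N : Finset (Fin n) := {w | w ∈ X ∧ G z w}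
  have hN : 2 * (1 - δ) * n ≤ (#N : ℝ) := by
    rwa [← Set.ncard_coe_finset, coe_filter_univ]
  have hdeg' (v : Fin n) : δ * n ≤ (#{w | G v w} : ℝ) := by
    rw [← Set.ncard_coe_finset, coe_filter_univ]; exact hdeg v
  have hasymm : ∀ u ∈ N, ∀ v ∈ N, G u v → ¬ G v u := by
    intro u hu v hv huv hvu
    simp only [N, mem_filter_univ] at hu hv
    exact hno ⟨u, v, hu.1, hv.1, hu.2, hv.2, by rintro rfl; exact hirr u huv, huv, hvu⟩
  have hNne : N.Nonempty := by
    rw [nonempty_iff_ne_empty]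
    intro hempty
    have hz_lt : #{w | G z w} < n := by
      simpa using card_lt_univ_of_notMem (s := {w | G z w}) (x := z) (by simpa using hirr z)
    have hz_lt' : (#{w | G z w} : ℝ) + 1 ≤ n := by exact_mod_cast hz_lt
    rw [hempty, card_empty, Nat.cast_zero] at hN
    linarith [hdeg' z]
  obtain ⟨u, -, hu⟩ := exists_two_mul_card_filter_lt hasymm hNne
  have hu' : (2 * #{v ∈ N | G u v} : ℝ) + 1 ≤ #N := by exact_mod_cast hu
  have hsplit : (#{v | G u v} : ℝ) + #N ≤ #{v ∈ N | G u v} + n := by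
    exact_mod_cast Fintype.card_fin n ▸ card_filter_univ_add_card_le (G u) N
  linarith [hdeg' u]
end

section
/- Let G be a digraph, and suppose x, x', y, y', z, z' are vertices such that each of the triples {x,y,z} and {x',y',z'} has complete base graph with every vertex having out-degree at least 1 within the triple. If the pair (y, y') is weakly s-connected and the pair (z, z') is weakly s-connected, then the pair (x, x') is weakly (2s+1)-connected. -/
/-- `S ∈ K_{3,1}(G)`: three vertices, each pair joined by a directed edge, each vertex
with an out-neighbour inside `S`. -/
def K31 {n : ℕ} (G : Fin n → Fin n → Prop) (S : Finset (Fin n)) : Prop :=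
  S.card = 3 ∧ (∀ x ∈ S, ∀ y ∈ S, x ≠ y → G x y ∨ G y x) ∧
    (∀ x ∈ S, ∃ y ∈ S, G x y)

/-- `u` and `u'` are weakly `s`-connected: there is a multiset `W` of `3s-1` vertices
such that both `{u} ∪ W` and `{u'} ∪ W` can be partitioned into `s` triples in
`K_{3,1}(G)`. -/
def WeaklyConn {n : ℕ} (G : Fin n → Fin n → Prop) (s : ℕ) (u u' : Fin n) : Prop :=
  ∃ W : Multiset (Fin n), Multiset.card W = 3 * s - 1 ∧
    (∃ T : Multiset (Finset (Fin n)), Multiset.card T = s ∧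
      (∀ S ∈ T, K31 G S) ∧ (T.map Finset.val).sum = u ::ₘ W) ∧
    (∃ T : Multiset (Finset (Fin n)), Multiset.card T = s ∧
      (∀ S ∈ T, K31 G S) ∧ (T.map Finset.val).sum = u' ::ₘ W)

/-!
Glue the two triples onto the witnesses for `y, y'` and `z, z'` crosswise: with
`W = {y, z} + ({y'} + W_y) + ({z'} + W_z)`, the multiset `{x} + W` is partitioned by
`{x, y, z}` together with the partitions of `{y'} + W_y` and `{z'} + W_z`, and `{x'} + W` by
`{x', y', z'}` together with those of `{y} + W_y` and `{z} + W_z`. The size of `W` need not be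
tracked: a partition into `k` triples always covers exactly `3k` vertices.
-/

open Multiset

theorem Finset.val_eq_of_card_eq_three {α : Type*} [DecidableEq α] {a b c : α}
    (h : ({a, b, c} : Finset α).card = 3) :
    ({a, b, c} : Finset α).val = a ::ₘ b ::ₘ c ::ₘ 0 := by
  have hs : ({a, b, c} : Finset α) = (a ::ₘ b ::ₘ c ::ₘ 0).toFinset := by ext; simp
  rw [hs] at h ⊢
  rw [Multiset.toFinset_val]
  exact Multiset.dedup_eq_self.mpr (Multiset.toFinset_card_eq_card_iff_nodup.mp h)

section

variable {n : ℕ} (G : Fin n → Fin n → Prop)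

def IsK31Partition (T : Multiset (Finset (Fin n))) (M : Multiset (Fin n)) : Prop :=
  (∀ S ∈ T, K31 G S) ∧ (T.map Finset.val).sum = M

variable {G}

namespace IsK31Partition

variable {T T' : Multiset (Finset (Fin n))} {M M' : Multiset (Fin n)}

theorem card_eq (hT : IsK31Partition G T M) : card M = 3 * card T := by
  have hcard : T.map (card ∘ Finset.val) = T.map fun _ => 3 :=
    map_congr rfl fun S hS => (hT.1 S hS).1
  rw [← hT.2, ← join, card_join, map_map, hcard, map_const', sum_replicate, smul_eq_mul,
    mul_comm]

theorem add (hT : IsK31Partition G T M) (hT' : IsK31Partition G T' M') :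
    IsK31Partition G (T + T') (M + M') := by
  refine ⟨fun S hS => ?_, by rw [map_add, sum_add, hT.2, hT'.2]⟩
  rcases mem_add.mp hS with hS | hS
  exacts [hT.1 S hS, hT'.1 S hS]

theorem cons_triple {a b c : Fin n} (habc : K31 G {a, b, c}) (hT : IsK31Partition G T M) :
    IsK31Partition G ({a, b, c} ::ₘ T) (a ::ₘ b ::ₘ c ::ₘ M) := by
  refine ⟨fun S hS => ?_, ?_⟩
  · rcases mem_cons.mp hS with rfl | hS
    exacts [habc, hT.1 S hS]
  · rw [map_cons, sum_cons, hT.2, Finset.val_eq_of_card_eq_three habc.1]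
    simp only [cons_add, zero_add]

end IsK31Partition

theorem weaklyConn_of_isK31Partition {s : ℕ} {u u' : Fin n} {W : Multiset (Fin n)}
    {T T' : Multiset (Finset (Fin n))} (hTs : card T = s) (hT : IsK31Partition G T (u ::ₘ W))
    (hT's : card T' = s) (hT' : IsK31Partition G T' (u' ::ₘ W)) : WeaklyConn G s u u' := by
  refine ⟨W, ?_, ⟨T, hTs, hT⟩, ⟨T', hT's, hT'⟩⟩
  have hcard := hT.card_eq
  rw [card_cons] at hcard
  omega

end

/-- If `{x,y,z}, {x',y',z'} ∈ K_{3,1}(G)`, `y, y'` are weakly `s`-connected and `z, z'`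
are weakly `s`-connected, then `x, x'` are weakly `(2s+1)`-connected. -/
theorem stmt_13 (n : ℕ) (G : Fin n → Fin n → Prop) (s : ℕ)
    (x y z x' y' z' : Fin n)
    (h1 : K31 G {x, y, z}) (h2 : K31 G {x', y', z'})
    (hy : WeaklyConn G s y y') (hz : WeaklyConn G s z z') :
    WeaklyConn G (2 * s + 1) x x' := by
  obtain ⟨Wy, -, ⟨Ty, hTy, hPy⟩, ⟨Ty', hTy', hPy'⟩⟩ := hy
  obtain ⟨Wz, -, ⟨Tz, hTz, hPz⟩, ⟨Tz', hTz', hPz'⟩⟩ := hz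
  have hswap : y' ::ₘ z' ::ₘ (y ::ₘ Wy + z ::ₘ Wz) = y ::ₘ z ::ₘ (y' ::ₘ Wy + z' ::ₘ Wz) := by
    simp only [← singleton_add]
    abel
  have hP' := (IsK31Partition.add hPy hPz).cons_triple h2
  rw [hswap] at hP'
  refine weaklyConn_of_isK31Partition (T := {x, y, z} ::ₘ (Ty' + Tz')) ?_
    ((IsK31Partition.add hPy' hPz').cons_triple h1) ?_ hP'
  · rw [card_cons, card_add, hTy', hTz']; ring
  · rw [card_cons, card_add, hTy, hTz]; ring
end

section
/- Let G be a digraph on n vertices with minimum out-degree δn where δ > 2/3, and let x be a vertex with in-degree greater than 2(1−δ)n. Then any two out-neighbours y, y' of x are weakly 1-connected: there exists a vertex z, an out-neighbour of both y and y' and an in-neighbour of x, such that both {x,y,z} and {x,y',z} are triples with complete base graph in which every vertex has out-degree at least 1. -/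
theorem Set.ncard_add_ncard_le_card_add_ncard_inter {α : Type*} [Finite α] (s t : Set α) :
    s.ncard + t.ncard ≤ Nat.card α + (s ∩ t).ncard := by
  rw [← Set.ncard_union_add_ncard_inter]
  exact Nat.add_le_add_right (Set.ncard_le_card _) _

theorem Set.inter_inter_nonempty_of_two_mul_card_lt {α : Type*} [Finite α] {s t u : Set α}
    (h : 2 * Nat.card α < s.ncard + t.ncard + u.ncard) : (s ∩ t ∩ u).Nonempty := by
  apply Set.nonempty_of_ncard_ne_zero
  have hst := Set.ncard_add_ncard_le_card_add_ncard_inter s t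
  have hstu := Set.ncard_add_ncard_le_card_add_ncard_inter (s ∩ t) u
  omega

theorem k31_of_cycle {n : ℕ} {G : Fin n → Fin n → Prop} (hirr : ∀ v, ¬ G v v) {a b c : Fin n}
    (hab : G a b) (hbc : G b c) (hca : G c a) : K31 G {a, b, c} := by
  have ne_of_adj {u v : Fin n} (huv : G u v) : u ≠ v := fun h => hirr u (h ▸ huv)
  refine ⟨Finset.card_eq_three.2 ⟨a, b, c, ne_of_adj hab, (ne_of_adj hca).symm,
    ne_of_adj hbc, rfl⟩, ?_, ?_⟩
  · simp only [Finset.mem_insert, Finset.mem_singleton]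
    rintro u (rfl | rfl | rfl) v (rfl | rfl | rfl) huv <;> tauto
  · simp only [Finset.mem_insert, Finset.mem_singleton]
    rintro u (rfl | rfl | rfl)
    exacts [⟨b, by simp, hab⟩, ⟨c, by simp, hbc⟩, ⟨a, by simp, hca⟩]

theorem stmt_14_general (n : ℕ) (δ : ℝ) (G : Fin n → Fin n → Prop)
    (hirr : ∀ v, ¬ G v v)
    (hdeg : ∀ v : Fin n, δ * n ≤ (Set.ncard {w | G v w} : ℝ))
    (x : Fin n) (hx : 2 * (1 - δ) * n < (Set.ncard {w | G w x} : ℝ))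
    (y y' : Fin n) (hy : G x y) (hy' : G x y') :
    ∃ z : Fin n, G y z ∧ G y' z ∧ G z x ∧ K31 G {x, y, z} ∧ K31 G {x, y', z} := by
  obtain ⟨z, ⟨hyz, hy'z⟩, hzx⟩ : ({w | G y w} ∩ {w | G y' w} ∩ {w | G w x}).Nonempty := by
    apply Set.inter_inter_nonempty_of_two_mul_card_lt
    have hdeg_sum : (2 * n : ℝ) <
        {w | G y w}.ncard + {w | G y' w}.ncard + {w | G w x}.ncard := by
      linarith [hdeg y, hdeg y']
    rw [Nat.card_fin]
    exact_mod_cast hdeg_sum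
  exact ⟨z, hyz, hy'z, hzx, k31_of_cycle hirr hy hyz hzx, k31_of_cycle hirr hy' hy'z hzx⟩

/-- If `δ⁺(G) ≥ δn` with `δ > 2/3` and `d⁻(x) > 2(1-δ)n`, then any two out-neighbours
`y, y'` of `x` are weakly 1-connected via a common vertex `z`. -/
theorem stmt_14 (n : ℕ) (δ : ℝ) (hδ : 2 / 3 < δ) (G : Fin n → Fin n → Prop)
    (hirr : ∀ v, ¬ G v v)
    (hdeg : ∀ v : Fin n, δ * n ≤ (Set.ncard {w | G v w} : ℝ))
    (x : Fin n) (hx : 2 * (1 - δ) * n < (Set.ncard {w | G w x} : ℝ))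
    (y y' : Fin n) (hy : G x y) (hy' : G x y') :
    ∃ z : Fin n, G y z ∧ G y' z ∧ G z x ∧ K31 G {x, y, z} ∧ K31 G {x, y', z} :=
  stmt_14_general n δ G hirr hdeg x hx y y' hy hy'
end

section
/- Let G and H be as in the edge-colouring-to-digraph conversion: H is a digraph on V(G) whose base graph is a subgraph of the edge-coloured graph G, such that for every vertex u the edges from u to its H-out-neighbourhood are rainbow in G, and for every directed edge uv of H at most √n in-neighbours w of u satisfy c(uw) = c(uv). Then, for each vertex v, there are at most 3n^{3/2} three-element sets S containing v such that every pair of S is joined by a directed edge of H and every vertex of S has an H-out-neighbour inside S, yet the triangle G[S] is not rainbow. -/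
/-!
A non-rainbow `S ∈ K_{3,1}(H)` has an apex `a` whose two edges in `S` share a colour. As the
out-edges at `a` are rainbow, `a` sends an edge to one vertex `p` of `S` and receives one from
the other, `q`, with `c a p = c a q`. Fix `v ∈ S` and let `x` be `a` if `v ≠ a`, and `p` otherwise.
If `p ∈ {v, x}`, the third vertex `q` is one of at most `√n` in-neighbours of `a` coloured like
`ap`; if `v = q`, the third vertex `p` is unique by rainbowness at `a`. This gives at most `n (2√n + 1) ≤ 3 n^{3/2}` sets.
-/

lemma Finset.eq_insert_insert_of_mem_of_card_eq_three {V : Type*} [DecidableEq V]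
    {S : Finset V} {a b d : V} (hS : S.card = 3) (ha : a ∈ S) (hb : b ∈ S) (hd : d ∈ S)
    (hab : a ≠ b) (had : a ≠ d) (hbd : b ≠ d) : S = {a, b, d} :=
  (Finset.eq_of_subset_of_card_le (by simp [Finset.insert_subset_iff, ha, hb, hd])
    (by rw [hS, Finset.card_eq_three.mpr ⟨a, b, d, hab, had, hbd, rfl⟩])).symm

namespace EdgeColouredDigraph

variable {V : Type*} (H : V → V → Prop) (c : V → V → ℕ)

def nonRainbowK31 (v : V) : Set (Finset V) :=
  {S | v ∈ S ∧ S.card = 3 ∧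
    (∀ a ∈ S, ∀ b ∈ S, a ≠ b → H a b ∨ H b a) ∧ (∀ a ∈ S, ∃ b ∈ S, H a b) ∧
    (∃ a ∈ S, ∃ b ∈ S, ∃ d ∈ S, a ≠ b ∧ a ≠ d ∧ b ≠ d ∧ c a b = c a d)}

/-- The vertices `y` for which `{v, x, y}` can be a non-rainbow member of `K_{3,1}(H)`, split
according to whether the apex is `v` with out-neighbour `x`, or `x` with out-neighbour `v`, or `x`
with in-neighbour `v`. -/
def thirdVertices (v x : V) : Set V :=
  {y | H v x ∧ H y v ∧ c v y = c v x} ∪ {y | H x v ∧ H y x ∧ c x y = c x v} ∪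
    {y | H v x ∧ H x y ∧ c x y = c x v}

variable {H c} [DecidableEq V]

lemma exists_apex (hirr : ∀ v, ¬ H v v)
    (hrb : ∀ u v w, H u v → H u w → v ≠ w → c u v ≠ c u w) {v : V} {S : Finset V}
    (hS : S ∈ nonRainbowK31 H c v) :
    ∃ a p q, S = {a, p, q} ∧ H a p ∧ H q a ∧ c a p = c a q := by
  obtain ⟨-, hcard, hpair, hout, a, ha, b, hb, d, hd, hab, had, hbd, hc⟩ := hS
  have hSabd := Finset.eq_insert_insert_of_mem_of_card_eq_three hcard ha hb hd hab had hbd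
  obtain ⟨t, ht, hat⟩ := hout a ha
  rw [hSabd, Finset.mem_insert, Finset.mem_insert, Finset.mem_singleton] at ht
  rcases ht with rfl | rfl | rfl
  · exact absurd hat (hirr t)
  · have hda : H d a := (hpair a ha d hd had).resolve_left fun h => hrb a t d hat h hbd hc
    exact ⟨a, t, d, hSabd, hat, hda, hc⟩
  · have hba : H b a :=
      (hpair a ha b hb hab).resolve_left fun h => hrb a t b hat h hbd.symm hc.symm
    exact ⟨a, t, b, by rw [hSabd, Finset.pair_comm], hat, hba, hc.symm⟩

lemma exists_mem_thirdVertices {v a p q : V} (hv : v ∈ ({a, p, q} : Finset V))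
    (hap : H a p) (hqa : H q a) (hc : c a p = c a q) :
    ∃ x, ∃ y ∈ thirdVertices H c v x, ({a, p, q} : Finset V) = {v, x, y} := by
  simp only [Finset.mem_insert, Finset.mem_singleton] at hv
  rcases hv with rfl | rfl | rfl
  · exact ⟨p, q, .inl (.inl ⟨hap, hqa, hc.symm⟩), rfl⟩
  · exact ⟨a, q, .inl (.inr ⟨hap, hqa, hc.symm⟩), Finset.insert_comm _ _ _⟩
  · exact ⟨a, p, .inr ⟨hqa, hap, hc⟩, by rw [Finset.pair_comm, Finset.insert_comm]⟩

lemma ncard_thirdVertices_le [Finite V] {B : ℝ}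
    (hrb : ∀ u v w, H u v → H u w → v ≠ w → c u v ≠ c u w)
    (hfew : ∀ u v, H u v → (Set.ncard {w | H w u ∧ c u w = c u v} : ℝ) ≤ B)
    (hB : 0 ≤ B) (v x : V) :
    ((thirdVertices H c v x).ncard : ℝ) ≤ 2 * B + 1 := by
  have sameColour_le (u w : V) : (Set.ncard {y | H u w ∧ H y u ∧ c u y = c u w} : ℝ) ≤ B := by
    by_cases huw : H u w
    · simpa only [huw, true_and] using hfew u w huw
    · simp [huw, hB]
  have unique : (Set.ncard {y | H v x ∧ H x y ∧ c x y = c x v} : ℝ) ≤ 1 := by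
    refine Nat.cast_le_one.mpr <| (Set.ncard_le_one (Set.toFinite _)).mpr fun y hy z hz => ?_
    by_contra hyz
    exact hrb x y z hy.2.1 hz.2.1 hyz (hy.2.2.trans hz.2.2.symm)
  have hsplit : ((thirdVertices H c v x).ncard : ℝ) ≤ _ := Nat.cast_le.mpr <|
    (Set.ncard_union_le _ _).trans (Nat.add_le_add_right (Set.ncard_union_le _ _) _)
  push_cast at hsplit
  linarith [sameColour_le v x, sameColour_le x v]

lemma ncard_nonRainbowK31_le [Fintype V] {B : ℝ} (hirr : ∀ v, ¬ H v v)
    (hrb : ∀ u v w, H u v → H u w → v ≠ w → c u v ≠ c u w)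
    (hfew : ∀ u v, H u v → (Set.ncard {w | H w u ∧ c u w = c u v} : ℝ) ≤ B)
    (hB : 0 ≤ B) (v : V) :
    ((nonRainbowK31 H c v).ncard : ℝ) ≤ Fintype.card V * (2 * B + 1) := by
  have hcover : nonRainbowK31 H c v ⊆
      ⋃ x, (fun y => ({v, x, y} : Finset V)) '' thirdVertices H c v x := by
    intro S hS
    obtain ⟨a, p, q, rfl, hap, hqa, hc⟩ := exists_apex hirr hrb hS
    obtain ⟨x, y, hy, hxy⟩ := exists_mem_thirdVertices hS.1 hap hqa hc
    exact Set.mem_iUnion.mpr ⟨x, y, hy, hxy.symm⟩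
  have hcount : (nonRainbowK31 H c v).ncard ≤
      ∑ x, (thirdVertices H c v x).ncard :=
    (Set.ncard_le_ncard hcover).trans <| (Set.ncard_iUnion_le_of_fintype _).trans <|
      Finset.sum_le_sum fun x _ => Set.ncard_image_le (Set.toFinite _)
  calc ((nonRainbowK31 H c v).ncard : ℝ)
      ≤ ∑ x, ((thirdVertices H c v x).ncard : ℝ) := by exact_mod_cast hcount
    _ ≤ ∑ _x : V, (2 * B + 1) :=
      Finset.sum_le_sum fun x _ => ncard_thirdVertices_le hrb hfew hB v x
    _ = Fintype.card V * (2 * B + 1) := by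
      rw [Finset.sum_const, Finset.card_univ, nsmul_eq_mul]

end EdgeColouredDigraph

lemma Real.mul_two_mul_sqrt_add_one_le (n : ℕ) :
    (n : ℝ) * (2 * √n + 1) ≤ 3 * (n : ℝ) ^ ((3 : ℝ) / 2) := by
  rw [Real.rpow_div_two_eq_sqrt _ n.cast_nonneg, Real.rpow_ofNat]
  rcases n.eq_zero_or_pos with rfl | hn
  · simp
  have hs : 1 ≤ √(n : ℝ) := Real.one_le_sqrt.mpr (by exact_mod_cast hn)
  rw [pow_succ, Real.sq_sqrt n.cast_nonneg]
  nlinarith [mul_le_mul_of_nonneg_left hs n.cast_nonneg]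

theorem stmt_15_general (n : ℕ) (c : Fin n → Fin n → ℕ)
    (H : Fin n → Fin n → Prop) (hirr : ∀ v, ¬ H v v)
    (hrb : ∀ u v w, H u v → H u w → v ≠ w → c u v ≠ c u w)
    (hfew : ∀ u v, H u v → (Set.ncard {w | H w u ∧ c u w = c u v} : ℝ) ≤ Real.sqrt n) :
    ∀ v : Fin n,
      (Set.ncard {S : Finset (Fin n) | v ∈ S ∧ S.card = 3 ∧
        (∀ a ∈ S, ∀ b ∈ S, a ≠ b → H a b ∨ H b a) ∧ (∀ a ∈ S, ∃ b ∈ S, H a b) ∧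
        (∃ a ∈ S, ∃ b ∈ S, ∃ d ∈ S, a ≠ b ∧ a ≠ d ∧ b ≠ d ∧ c a b = c a d)} : ℝ)
      ≤ 3 * (n : ℝ) ^ ((3 : ℝ) / 2) := by
  intro v
  calc _ ≤ (Fintype.card (Fin n) : ℝ) * (2 * √n + 1) :=
        EdgeColouredDigraph.ncard_nonRainbowK31_le hirr hrb hfew (Real.sqrt_nonneg _) v
    _ ≤ 3 * (n : ℝ) ^ ((3 : ℝ) / 2) := by
        simpa only [Fintype.card_fin] using Real.mul_two_mul_sqrt_add_one_le n

/-- For the digraph `H` obtained from an edge-coloured graph `G`, each vertex `v` lies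
in at most `3n^{3/2}` triples `S ∈ K_{3,1}(H)` such that `G[S]` is not rainbow. -/
theorem stmt_15 (n : ℕ) (G : SimpleGraph (Fin n)) (c : Fin n → Fin n → ℕ)
    (hsym : ∀ u v, c u v = c v u)
    (H : Fin n → Fin n → Prop) (hirr : ∀ v, ¬ H v v)
    (hbase : ∀ u v, H u v → G.Adj u v)
    (hrb : ∀ u v w, H u v → H u w → v ≠ w → c u v ≠ c u w)
    (hfew : ∀ u v, H u v → (Set.ncard {w | H w u ∧ c u w = c u v} : ℝ) ≤ Real.sqrt n)
    (hpairs : ∀ v : Fin n,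
      Set.ncard {p : Fin n × Fin n | H p.1 v ∧ H v p.2 ∧ c p.1 v = c v p.2} ≤ n) :
    ∀ v : Fin n,
      (Set.ncard {S : Finset (Fin n) | v ∈ S ∧ S.card = 3 ∧
        (∀ a ∈ S, ∀ b ∈ S, a ≠ b → H a b ∨ H b a) ∧ (∀ a ∈ S, ∃ b ∈ S, H a b) ∧
        (∃ a ∈ S, ∃ b ∈ S, ∃ d ∈ S, a ≠ b ∧ a ≠ d ∧ b ≠ d ∧ c a b = c a d)} : ℝ)
      ≤ 3 * (n : ℝ) ^ ((3 : ℝ) / 2) :=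
  stmt_15_general n c H hirr hrb hfew
end

section
/- For r ≥ 3, every proper edge-colouring of the complete r-partite graph K_r(t) with parts of size t = r³ contains a rainbow copy of K_r, i.e., r vertices, one in each part, such that all C(r,2) edges among them have pairwise distinct colours. -/
/-!
Greedy choice, part by part. Once a rainbow transversal of `m` parts is fixed, a vertex `x` of
the next part is bad if an edge from `x` to a chosen vertex repeats one of the at most `m²`
colours already used. Properness at the chosen vertex means each pair (chosen vertex, used
colour) rules out at most one `x`, so fewer than `m³ < r³` vertices are bad; properness at a
good `x` makes its new edges pairwise distinct in colour.
-/

open Finset Function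

variable {ι α κ : Type*}

def IsProperColouring (c : ι × α → ι × α → κ) : Prop :=
  ∀ u v w : ι × α, u.1 ≠ v.1 → u.1 ≠ w.1 → v ≠ w → c u v ≠ c u w

/-- A transversal is encoded by `g : ι → α`, its vertex in part `i` being `(i, g i)`. -/
def transversalColour (c : ι × α → ι × α → κ) (hc : ∀ u v, c u v = c v u) (g : ι → α) :
    Sym2 ι → κ :=
  Sym2.lift ⟨fun i j ↦ c (i, g i) (j, g j), fun _ _ ↦ hc _ _⟩

@[simp]
lemma transversalColour_mk (c : ι × α → ι × α → κ) (hc : ∀ u v, c u v = c v u) (g : ι → α)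
    (i j : ι) : transversalColour c hc g s(i, j) = c (i, g i) (j, g j) := rfl

def edgesWithin (s : Set ι) : Set (Sym2 ι) := {z ∈ s.sym2 | ¬ z.IsDiag}

@[simp]
lemma mk_mem_edgesWithin {s : Set ι} {i j : ι} :
    s(i, j) ∈ edgesWithin s ↔ i ∈ s ∧ j ∈ s ∧ i ≠ j := by
  simp [edgesWithin, and_assoc]

lemma edgesWithin_insert {s : Set ι} {a : ι} (ha : a ∉ s) :
    edgesWithin (insert a s) = edgesWithin s ∪ (fun b ↦ s(a, b)) '' s := by
  ext ⟨x, y⟩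
  simp only [mk_mem_edgesWithin, Set.mem_insert_iff, Set.mem_union, Set.mem_image, Sym2.eq_iff]
  aesop

lemma disjoint_edgesWithin_image {s : Set ι} {a : ι} (ha : a ∉ s) :
    Disjoint (edgesWithin s) ((fun b ↦ s(a, b)) '' s) := by
  rw [Set.disjoint_right]
  rintro _ ⟨b, -, rfl⟩ hab
  exact ha (mk_mem_edgesWithin.1 hab).1

namespace IsProperColouring

variable {c : ι × α → ι × α → κ}

lemma injective_right (hc : IsProperColouring c) (u : ι × α) {a : ι} (ha : u.1 ≠ a) :
    Injective fun x : α ↦ c u (a, x) := by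
  intro x y hxy
  by_contra hne
  exact hc u (a, x) (a, y) ha ha (by simpa using hne) hxy

/-- By properness, each `u ∈ U` sees each colour of `D` at most once in part `a`. -/
lemma exists_forall_notMem [Fintype α] [DecidableEq κ] (hc : IsProperColouring c) {a : ι}
    (U : Finset (ι × α)) (hU : ∀ u ∈ U, u.1 ≠ a) (D : Finset κ)
    (hcard : #U * #D < Fintype.card α) : ∃ x : α, ∀ u ∈ U, c u (a, x) ∉ D := by
  classical
  set bad := U.biUnion fun u ↦ {x | c u (a, x) ∈ D}
  have hbad : #bad < #(univ : Finset α) := calc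
    #bad ≤ ∑ u ∈ U, #{x | c u (a, x) ∈ D} := card_biUnion_le
    _ ≤ ∑ _u ∈ U, #D := sum_le_sum fun u hu ↦
        card_le_card_of_injOn _ (fun x hx ↦ (mem_filter.1 hx).2)
          (hc.injective_right u (hU u hu)).injOn
    _ < #(univ : Finset α) := by simpa [sum_const, smul_eq_mul] using hcard
  obtain ⟨x, -, hx⟩ := exists_mem_notMem_of_card_lt_card hbad
  exact ⟨x, fun u hu hD ↦ hx (mem_biUnion.2 ⟨u, hu, by simpa using hD⟩)⟩

lemma exists_update_injOn_transversalColour [Fintype α] [DecidableEq ι]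
    (hc : IsProperColouring c) (hsym : ∀ u v, c u v = c v u) {s : Finset ι} {a : ι}
    (ha : a ∉ s) {g : ι → α} (hg : Set.InjOn (transversalColour c hsym g) (edgesWithin s))
    (hs : #s ^ 3 < Fintype.card α) :
    ∃ x, Set.InjOn (transversalColour c hsym (update g a x)) (edgesWithin ↑(insert a s)) := by
  classical
  set D := (s ×ˢ s).image fun p ↦ transversalColour c hsym g s(p.1, p.2)
  have hD : #D ≤ #s ^ 2 := card_image_le.trans (by rw [card_product, sq])
  have hne : ∀ j ∈ s, j ≠ a := fun j hj h ↦ ha (h ▸ hj)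
  obtain ⟨x, hx⟩ := hc.exists_forall_notMem (a := a) (s.image fun j ↦ (j, g j))
    (by simpa using hne) D <| calc
      #(s.image fun j ↦ (j, g j)) * #D ≤ #s * #s ^ 2 := Nat.mul_le_mul card_image_le hD
      _ = #s ^ 3 := by ring
      _ < Fintype.card α := hs
  refine ⟨x, ?_⟩
  have hold : Set.EqOn (transversalColour c hsym (update g a x)) (transversalColour c hsym g)
      (edgesWithin s) := by
    rintro ⟨i, j⟩ hij
    obtain ⟨hi, hj, -⟩ := mk_mem_edgesWithin.1 hij
    simp [update_of_ne (hne i hi), update_of_ne (hne j hj)]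
  have hnew : ∀ j ∈ s, transversalColour c hsym (update g a x) s(a, j) = c (a, x) (j, g j) :=
    fun j hj ↦ by simp [update_of_ne (hne j hj)]
  have hD_mem : ∀ z ∈ edgesWithin s, transversalColour c hsym g z ∈ D := by
    rintro ⟨i, j⟩ hij
    obtain ⟨hi, hj, -⟩ := mk_mem_edgesWithin.1 hij
    exact mem_image.2 ⟨(i, j), mem_product.2 ⟨hi, hj⟩, rfl⟩
  rw [coe_insert, edgesWithin_insert (mod_cast ha),
    Set.injOn_union (disjoint_edgesWithin_image (mod_cast ha))]
  refine ⟨hg.congr hold.symm, Set.InjOn.image_of_comp ?_, ?_⟩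
  · intro j hj l hl h
    simp only [comp_apply, hnew j hj, hnew l hl] at h
    by_contra hjl
    exact hc (a, x) (j, g j) (l, g l) (hne j hj).symm (hne l hl).symm (by simp [hjl]) h
  · rintro z hz _ ⟨j, hj, rfl⟩ h
    rw [hold hz, hnew j hj, hsym] at h
    exact hx (j, g j) (mem_image_of_mem _ hj) (h ▸ hD_mem z hz)

lemma exists_injOn_transversalColour [Fintype α] [Nonempty (ι → α)] (hc : IsProperColouring c)
    (hsym : ∀ u v, c u v = c v u) (s : Finset ι) (hs : #s ^ 3 ≤ Fintype.card α) :
    ∃ g, Set.InjOn (transversalColour c hsym g) (edgesWithin s) := by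
  classical
  induction s using Finset.induction_on with
  | empty => exact ⟨Classical.arbitrary _, by simp [edgesWithin]⟩
  | insert a s ha ih =>
    have hlt : #s ^ 3 < Fintype.card α :=
      (Nat.pow_lt_pow_left (card_lt_card (ssubset_insert ha)) three_ne_zero).trans_le hs
    obtain ⟨g, hg⟩ := ih hlt.le
    obtain ⟨x, hx⟩ := hc.exists_update_injOn_transversalColour hsym ha hg hlt
    exact ⟨_, hx⟩

lemma exists_injOn_transversalColour_univ [Fintype ι] [Fintype α] (hc : IsProperColouring c)
    (hsym : ∀ u v, c u v = c v u) (hcard : Fintype.card ι ^ 3 ≤ Fintype.card α) :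
    ∃ g, Set.InjOn (transversalColour c hsym g) (edgesWithin Set.univ) := by
  have : Nonempty (ι → α) := by
    rcases isEmpty_or_nonempty ι with hι | hι
    · infer_instance
    · have : Nonempty α := Fintype.card_pos_iff.1 <| (pow_pos Fintype.card_pos 3).trans_le hcard
      infer_instance
  simpa using hc.exists_injOn_transversalColour hsym univ (by simpa using hcard)

end IsProperColouring

theorem stmt_17_general (r : ℕ)
    (c : (Fin r × Fin (r ^ 3)) → (Fin r × Fin (r ^ 3)) → ℕ)
    (hsym : ∀ u v, c u v = c v u)
    (hproper : ∀ u v w : Fin r × Fin (r ^ 3),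
      u.1 ≠ v.1 → u.1 ≠ w.1 → v ≠ w → c u v ≠ c u w) :
    ∃ f : Fin r → Fin r × Fin (r ^ 3), (∀ i, (f i).1 = i) ∧
      ∀ i j k l : Fin r, i ≠ j → k ≠ l → ({i, j} : Finset (Fin r)) ≠ {k, l} →
        c (f i) (f j) ≠ c (f k) (f l) := by
  obtain ⟨g, hg⟩ :=
    IsProperColouring.exists_injOn_transversalColour_univ hproper hsym (by simp)
  refine ⟨fun i ↦ (i, g i), fun i ↦ rfl, fun i j k l hij hkl hne h ↦ hne ?_⟩
  have hedge := hg (x₁ := s(i, j)) (x₂ := s(k, l)) (by simpa using hij) (by simpa using hkl) h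
  rcases Sym2.eq_iff.1 hedge with ⟨rfl, rfl⟩ | ⟨rfl, rfl⟩
  · rfl
  · exact pair_comm _ _

/-- Every proper edge-colouring of the complete `r`-partite graph `K_r(r³)` contains a
rainbow `K_r` with one vertex in each part. -/
theorem stmt_17 (r : ℕ) (hr : 3 ≤ r)
    (c : (Fin r × Fin (r ^ 3)) → (Fin r × Fin (r ^ 3)) → ℕ)
    (hsym : ∀ u v, c u v = c v u)
    (hproper : ∀ u v w : Fin r × Fin (r ^ 3),
      u.1 ≠ v.1 → u.1 ≠ w.1 → v ≠ w → c u v ≠ c u w) :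
    ∃ f : Fin r → Fin r × Fin (r ^ 3), (∀ i, (f i).1 = i) ∧
      ∀ i j k l : Fin r, i ≠ j → k ≠ l → ({i, j} : Finset (Fin r)) ≠ {k, l} →
        c (f i) (f j) ≠ c (f k) (f l) :=
  stmt_17_general r c hsym hproper
end

section
/- Let G be a digraph on n vertices with every out-degree at least (1 − 1/((2r−3)r) + γ)n for r ≥ 5 and γ > 0, and let v_0 be any vertex. Suppose T is a maximal collection of pairwise vertex-disjoint sets of r−1 vertices inside N^+(v_0), each of which spans a complete graph in the double-edge graph G^± of G. If |T| < n/r, then the set U of vertices of N^+(v_0) not covered by T satisfies |U| ≥ 2(r−2)n/(r(2r−3)) and the number of double edges inside U exceeds (1 − 1/(r−2))·C(|U|,2), contradicting Turán's theorem for K_{r−1}-free graphs; hence T has size at least n/r. -/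
/-!
Let `U` be the part of `N⁺(v₀)` not covered by `T` and `d = n - δ⁺(G)`. A non-edge `ab` of
`G^±[U]` comes from a missing arc `a → b` or `b → a`, so `G^±[U]` misses at most `d·|U|` of the
`C(|U|, 2)` pairs; Turán's theorem then yields a copy of `K_{r-1}` in `G^±[U]` as soon as
`|U| > (r - 2)(2d + 1)`, and such a clique could be added to `T`, contradicting maximality.
If `|T| < n/r`, then `|U| ≥ δ⁺(G) - (r - 1)|T|` is above this threshold once `γn ≥ r`.
-/

open Finset Fintype

namespace SimpleGraph

variable {V : Type*} [Fintype V]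

theorem CliqueFree.two_mul_mul_card_edgeFinset_le {G : SimpleGraph V} [DecidableRel G.Adj]
    {k : ℕ} (hk : 0 < k) (h : G.CliqueFree (k + 1)) :
    2 * k * #G.edgeFinset ≤ (k - 1) * card V ^ 2 := by
  obtain ⟨H, _, hH⟩ := exists_isTuranMaximal (V := V) hk
  calc 2 * k * #G.edgeFinset ≤ 2 * k * #H.edgeFinset := Nat.mul_le_mul_left _ (hH.2 h)
    _ = 2 * k * #(turanGraph (card V) k).edgeFinset := by
      rw [hH.nonempty_iso_turanGraph.some.card_edgeFinset_eq]
    _ ≤ (k - 1) * card V ^ 2 := mul_card_edgeFinset_turanGraph_le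

/-- Every pair `{a, b}` that is not an edge of `H` is charged to an ordered pair `(a, b)` or
`(b, a)` with `¬R`. -/
theorem choose_two_le_card_edgeFinset_add_sum [DecidableEq V] (H : SimpleGraph V)
    [DecidableRel H.Adj] (R : V → V → Prop) [DecidableRel R]
    (hR : ∀ a b, a ≠ b → R a b → R b a → H.Adj a b) :
    (card V).choose 2 ≤ #H.edgeFinset + ∑ a, #{b | ¬R a b} := by
  let missing := univ.biUnion fun a ↦ ({b | ¬R a b} : Finset V).image fun b ↦ s(a, b)
  have hcover : (⊤ : SimpleGraph V).edgeFinset ⊆ H.edgeFinset ∪ missing := by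
    intro e he
    induction e using Sym2.ind with
    | h a b =>
      have hab : a ≠ b := by simpa using he
      by_cases hH : H.Adj a b
      · simp [hH]
      · simp only [mem_union, mem_edgeFinset, mem_edgeSet, hH, false_or, missing, mem_biUnion,
          mem_univ, true_and, mem_image, mem_filter]
        by_cases hab' : R a b
        · exact ⟨b, a, fun hba ↦ hH (hR a b hab hab' hba), Sym2.eq_swap⟩
        · exact ⟨a, b, hab', rfl⟩
  calc (card V).choose 2 = #(⊤ : SimpleGraph V).edgeFinset :=
        card_edgeFinset_top_eq_card_choose_two.symm
    _ ≤ #H.edgeFinset + #missing := (card_le_card hcover).trans (card_union_le _ _)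
    _ ≤ #H.edgeFinset + ∑ a, #{b | ¬R a b} := by
      gcongr
      exact card_biUnion_le.trans (sum_le_sum fun a _ ↦ card_image_le)

end SimpleGraph

open SimpleGraph

variable {V : Type*}

/-- The graph `G^±` of double edges of a digraph `G`. -/
def doubleEdgeGraph (G : V → V → Prop) : SimpleGraph V where
  Adj a b := a ≠ b ∧ G a b ∧ G b a
  symm := ⟨fun _ _ h ↦ ⟨h.1.symm, h.2.2, h.2.1⟩⟩
  loopless := ⟨fun _ h ↦ h.1 rfl⟩

@[simp]
theorem doubleEdgeGraph_adj {G : V → V → Prop} {a b : V} :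
    (doubleEdgeGraph G).Adj a b ↔ a ≠ b ∧ G a b ∧ G b a := Iff.rfl

theorem exists_isNClique_doubleEdgeGraph [Fintype V] [DecidableEq V] {G : V → V → Prop}
    [DecidableRel G] {k : ℕ} {d : ℝ} (hk : 0 < k) (hd₀ : 0 ≤ d)
    (hd : ∀ a, (#{b | ¬G a b} : ℝ) ≤ d) {U : Finset V} (hU : k * (2 * d + 1) < #U) :
    ∃ S ⊆ U, (doubleEdgeGraph G).IsNClique (k + 1) S := by
  classical
  by_contra hno
  set H := (doubleEdgeGraph G).induce (U : Set V)
  have hfree : H.CliqueFree (k + 1) :=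
    (cliqueFree_induce_iff ..).2 fun t ht hc ↦ hno ⟨t, ht, hc⟩
  have hturan := hfree.two_mul_mul_card_edgeFinset_le hk
  have hcount := H.choose_two_le_card_edgeFinset_add_sum (fun a b ↦ G a b)
    fun _ _ hab hab' hba ↦ by simpa [H, Subtype.coe_ne_coe] using ⟨hab, hab', hba⟩
  have hmissing : ∀ a : U, (#{b : U | ¬G a b} : ℝ) ≤ d := fun a ↦ by
    refine le_trans ?_ (hd a)
    exact_mod_cast card_le_card_of_injOn Subtype.val (fun b hb ↦ by simpa using hb)
      Subtype.val_injective.injOn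
  have hsum : (∑ a : U, #{b : U | ¬G a b} : ℝ) ≤ #U * d := by
    simpa using sum_le_sum fun a (_ : a ∈ univ) ↦ hmissing a
  simp only [coe_sort_coe, card_coe] at hturan hcount
  have hturan' : 2 * k * (#H.edgeFinset : ℝ) ≤ (k - 1) * #U ^ 2 := by
    have := (Nat.cast_le (α := ℝ)).2 hturan
    push_cast [Nat.cast_pred hk] at this
    exact this
  have hcount' : (#U : ℝ) * (#U - 1) / 2 ≤ #H.edgeFinset + #U * d := by
    have := (Nat.cast_le (α := ℝ)).2 hcount
    push_cast [Nat.cast_choose_two] at this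
    linarith
  have hUpos : (0 : ℝ) < #U := lt_of_le_of_lt (by positivity) hU
  have hk1 : (1 : ℝ) ≤ k := by exact_mod_cast hk
  nlinarith

theorem card_filter_not_le_of_le_ncard [Fintype V] {G : V → V → Prop} [DecidableRel G] {v : V}
    {δ : ℝ} (h : δ ≤ {w | G v w}.ncard) : (#{w | ¬G v w} : ℝ) ≤ card V - δ := by
  have hsplit := card_filter_add_card_filter_not (s := univ) (G v)
  rw [Set.ncard_eq_toFinset_card', Set.toFinset_ofPred] at h
  rw [card_univ] at hsplit
  have := congrArg (Nat.cast : ℕ → ℝ) hsplit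
  push_cast at this
  linarith

theorem card_le_card_sdiff_biUnion_add [DecidableEq V] (s : Finset V) (T : Finset (Finset V))
    {m : ℕ} (hT : ∀ S ∈ T, #S ≤ m) : #s ≤ #(s \ T.biUnion id) + #T * m :=
  card_le_card_sdiff_add_card.trans (by grw [card_biUnion_le_card_mul T id m hT])

/-- With `δ` the out-degree bound and `t < n/r` disjoint `(r-1)`-sets, the lower bound
`δ - (r - 1)t` for the uncovered part of `N⁺(v₀)` beats the Turán threshold `(r - 2)(2d + 1)`,
`d = n - δ`: the gap is `(2r - 3)γn - (r - 2)`. -/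
theorem turan_threshold_lt_of_lt_div {r γ n δ t : ℝ} (hr : 2 ≤ r) (hγ : 0 < γ) (hn : r / γ ≤ n)
    (hδ : δ = (1 - 1 / ((2 * r - 3) * r) + γ) * n) (ht : t < n / r) :
    (r - 2) * (2 * (n - δ) + 1) < δ - (r - 1) * t := by
  have hγn : r ≤ γ * n := by rwa [div_le_iff₀ hγ, mul_comm] at hn
  have hgap : δ - (r - 1) * (n / r) - (r - 2) * (2 * (n - δ) + 1)
      = (2 * r - 3) * γ * n - (r - 2) := by
    have : 2 * r - 3 ≠ 0 := by linarith
    have : r ≠ 0 := by linarith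
    rw [hδ]
    field_simp
    ring
  have ht' : (r - 1) * t < (r - 1) * (n / r) := by gcongr; linarith
  nlinarith

/-- For `r ≥ 5`, `γ > 0` and `n` large, in a digraph with minimum out-degree at least
`(1 - 1/((2r-3)r) + γ)n`, any maximal collection `T` of pairwise disjoint `(r-1)`-sets
inside `N⁺(v₀)` spanning complete graphs in `G^±` has size at least `n/r`. -/
theorem stmt_18 (r : ℕ) (γ : ℝ) (hr : 5 ≤ r) (hγ : 0 < γ) :
    ∃ n₀ : ℕ, ∀ n, n₀ ≤ n → ∀ G : Fin n → Fin n → Prop, (∀ v, ¬ G v v) →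
      (∀ v : Fin n, (1 - 1 / ((2 * (r : ℝ) - 3) * r) + γ) * n ≤ (Set.ncard {w | G v w} : ℝ)) →
      ∀ v₀ : Fin n, ∀ T : Finset (Finset (Fin n)),
        (∀ S ∈ T, S.card = r - 1 ∧ (∀ w ∈ S, G v₀ w) ∧
          (∀ a ∈ S, ∀ b ∈ S, a ≠ b → G a b ∧ G b a)) →
        (∀ S ∈ T, ∀ S' ∈ T, S ≠ S' → Disjoint S S') →
        (∀ S : Finset (Fin n), S.card = r - 1 → (∀ w ∈ S, G v₀ w) →
          (∀ a ∈ S, ∀ b ∈ S, a ≠ b → G a b ∧ G b a) →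
          (∀ S' ∈ T, Disjoint S S') → S ∈ T) →
        (n : ℝ) / r ≤ T.card := by
  classical
  refine ⟨⌈(r : ℝ) / γ⌉₊, fun n hn G _ hdeg v₀ T hT _ hmax ↦ ?_⟩
  by_contra! hlt
  set δ := (1 - 1 / ((2 * (r : ℝ) - 3) * r) + γ) * n with hδ
  have hd : ∀ a, (#{b | ¬G a b} : ℝ) ≤ n - δ := fun a ↦ by
    simpa using card_filter_not_le_of_le_ncard (hdeg a)
  set U := ({w | G v₀ w} : Finset (Fin n)) \ T.biUnion id
  have hU : ((r - 2 : ℕ) : ℝ) * (2 * (n - δ) + 1) < #U := by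
    have hN : δ ≤ #({w | G v₀ w} : Finset (Fin n)) := by
      simpa [Set.ncard_eq_toFinset_card', Set.toFinset_ofPred] using hdeg v₀
    have hcover : (#({w | G v₀ w} : Finset (Fin n)) : ℝ) ≤ #U + #T * (r - 1 : ℕ) := by
      exact_mod_cast card_le_card_sdiff_biUnion_add _ T fun S hS ↦ (hT S hS).1.le
    rw [Nat.cast_sub (by omega : 1 ≤ r), Nat.cast_one] at hcover
    rw [Nat.cast_sub (by omega : 2 ≤ r), Nat.cast_two]
    have := turan_threshold_lt_of_lt_div (r := r) (by norm_cast; omega) hγ (Nat.ceil_le.1 hn)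
      hδ hlt
    linarith
  obtain ⟨S, hSU, hS⟩ :=
    exists_isNClique_doubleEdgeGraph (by omega) ((Nat.cast_nonneg _).trans (hd v₀)) hd hU
  rw [show r - 2 + 1 = r - 1 by omega] at hS
  have hS_uncovered : ∀ x ∈ S, x ∉ T.biUnion id := fun x hx ↦ (mem_sdiff.1 (hSU hx)).2
  have hSmem : S ∈ T := hmax S hS.card_eq (fun w hw ↦ by simpa using (mem_sdiff.1 (hSU hw)).1)
    (fun a ha b hb hab ↦ (hS.isClique ha hb hab).2)
    (fun S' hS' ↦ disjoint_left.2 fun x hx hx' ↦ hS_uncovered x hx (mem_biUnion.2 ⟨S', hS', hx'⟩))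
  obtain ⟨x, hx⟩ : S.Nonempty := card_pos.1 (by rw [hS.card_eq]; omega)
  exact hS_uncovered x hx (mem_biUnion.2 ⟨S, hSmem, hx⟩)
end

section
/- Let G be a digraph on n vertices with every vertex of out-degree exactly δn where δ = 5/6, and let ω : V(G) → [0,1] be a weighting such that every triple in K_{3,1}(G) has total weight at least 1 and the total weight of all vertices is less than n/3. Then for every vertex v with in-degree d^-(v), it holds that ω(v) > 1 − 1/(3f(v)) whenever f(v) := min{ d^-(v)/n + δ − 1, δ/2 } is positive; in particular ω(v) ≥ 1 − 2/(3δ) whenever d^-(v) ≥ (1 − δ/2)n. -/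
/-!
Fix `v` and an out-neighbour `x` of `v` of minimum weight `c`. Every `y` in
`N⁺(x) ∩ N⁻(v)` closes a cyclic triangle `v → x → y → v`, which lies in `K_{3,1}(G)`, so
`ω(y) ≥ 1 - ω(v) - c`, and there are at least `d⁻(v) + δn - n` such `y`. Splitting
according to whether `c ≥ (1 - ω(v))/2`, the vertices of `N⁺(v)` and of this
intersection alone carry weight at least `f(v) n (1 - ω(v))`, which must be below `n/3`.
-/

open Finset

section

variable {V : Type*} [DecidableEq V]

def IsK31Triple (G : V → V → Prop) (x y z : V) : Prop :=
  x ≠ y ∧ x ≠ z ∧ y ≠ z ∧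
    (∀ a ∈ ({x, y, z} : Finset V), ∀ b ∈ ({x, y, z} : Finset V), a ≠ b → G a b ∨ G b a) ∧
    (∀ a ∈ ({x, y, z} : Finset V), ∃ b ∈ ({x, y, z} : Finset V), G a b)

theorem isK31Triple_of_cycle {G : V → V → Prop} (hirr : ∀ v, ¬ G v v) {v x y : V}
    (hvx : G v x) (hxy : G x y) (hyv : G y v) : IsK31Triple G v x y := by
  refine ⟨fun h => hirr x (h ▸ hvx), fun h => hirr y (h ▸ hyv), fun h => hirr y (h ▸ hxy),
    ?_, ?_⟩
  · simp only [mem_insert, mem_singleton]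
    rintro a (rfl | rfl | rfl) b (rfl | rfl | rfl) hab <;> tauto
  · simp only [mem_insert, mem_singleton]
    rintro a (rfl | rfl | rfl)
    exacts [⟨x, by simp, hvx⟩, ⟨y, by simp, hxy⟩, ⟨v, by simp, hyv⟩]

variable [Fintype V]

theorem card_add_card_le_card_inter_add_card (s t : Finset V) :
    #s + #t ≤ #(s ∩ t) + Fintype.card V := by
  have := card_union_add_card_inter s t
  have := card_le_univ (s ∪ t)
  omega

variable {ω : V → ℝ}

theorem card_mul_add_card_mul_le_sum (hω : ∀ u, 0 ≤ ω u) {X Y : Finset V} {c t : ℝ}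
    (hc : 0 ≤ c) (hX : ∀ u ∈ X, c ≤ ω u) (hY : ∀ u ∈ Y, t - c ≤ ω u) :
    #X * c + #Y * (t - 2 * c) ≤ ∑ u, ω u := by
  have hXY : (#X : ℝ) ≤ #(X \ Y) + #Y := by
    exact_mod_cast (card_le_card_sdiff_add_card : #X ≤ #(X \ Y) + #Y)
  have hXY_sum : #(X \ Y) * c ≤ ∑ u ∈ X \ Y, ω u := by
    simpa using card_nsmul_le_sum (X \ Y) ω c fun u hu => hX u (mem_sdiff.mp hu).1
  have hY_sum : #Y * (t - c) ≤ ∑ u ∈ Y, ω u := by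
    simpa using card_nsmul_le_sum Y ω (t - c) hY
  have hsub : ∑ u ∈ X \ Y ∪ Y, ω u ≤ ∑ u, ω u :=
    sum_le_sum_of_subset_of_nonneg (subset_univ _) fun u _ _ => hω u
  rw [sum_union sdiff_disjoint] at hsub
  nlinarith

theorem mul_le_sum_of_le_card (hω : ∀ u, 0 ≤ ω u) {X Y : Finset V} {c t m : ℝ}
    (hc : 0 ≤ c) (hX : ∀ u ∈ X, c ≤ ω u) (hY : ∀ u ∈ Y, t - c ≤ ω u)
    (hm : 0 ≤ m) (hmY : m ≤ #Y) (hmX : 2 * m ≤ #X) : m * t ≤ ∑ u, ω u := by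
  -- If `2c ≥ t` the weight on `X` alone suffices; otherwise each vertex of `Y` gains `t - 2c > 0`.
  rcases le_or_gt t (2 * c) with hct | hct
  · have := card_mul_add_card_mul_le_sum hω (Y := ∅) hc hX (t := t) (by simp)
    simp only [card_empty, CharP.cast_eq_zero, zero_mul, add_zero] at this
    nlinarith
  · have := card_mul_add_card_mul_le_sum hω hc hX hY
    nlinarith

variable (G : V → V → Prop) [DecidableRel G]

def outNbhd (v : V) : Finset V := {w | G v w}

def inNbhd (v : V) : Finset V := {w | G w v}

variable {G}

theorem mul_one_sub_le_sum_of_isK31Triple (hirr : ∀ v, ¬ G v v) {d : ℝ}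
    (hout : ∀ u, d ≤ #(outNbhd G u))
    (hω : ∀ u, 0 ≤ ω u) (htriple : ∀ x y z, IsK31Triple G x y z → 1 ≤ ω x + ω y + ω z)
    (v : V) {m : ℝ} (hm : 0 ≤ m) (hm_in : m ≤ #(inNbhd G v) + d - Fintype.card V)
    (hm_out : 2 * m ≤ d) : m * (1 - ω v) ≤ ∑ u, ω u := by
  set X := outNbhd G v
  obtain hX | hX := X.eq_empty_or_nonempty
  · have hm0 : m = 0 := by
      have := hm_out.trans (hout v)
      simp only [X, hX, card_empty, CharP.cast_eq_zero] at this
      linarith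
    simpa [hm0] using sum_nonneg fun u _ => hω u
  obtain ⟨x, hxX, hx_min⟩ := exists_min_image X ω hX
  have hvx : G v x := (mem_filter.mp hxX).2
  set Y := outNbhd G x ∩ inNbhd G v
  have hY : ∀ y ∈ Y, 1 - ω v - ω x ≤ ω y := by
    intro y hy
    simp only [Y, outNbhd, inNbhd, mem_inter, mem_filter, mem_univ, true_and] at hy
    linarith [htriple v x y (isK31Triple_of_cycle hirr hvx hy.1 hy.2)]
  have hmY : m ≤ #Y := by
    have := card_add_card_le_card_inter_add_card (outNbhd G x) (inNbhd G v)
    have : (#(outNbhd G x) : ℝ) + #(inNbhd G v) ≤ #Y + Fintype.card V := by exact_mod_cast this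
    linarith [hout x]
  exact mul_le_sum_of_le_card hω (hω x) hx_min hY hm hmY (hm_out.trans (hout v))

end

/-- For a digraph with all out-degrees exactly `5n/6` and a weighting `ω` giving every
`K_{3,1}` triple total weight at least `1` with total weight below `n/3`, every vertex
`v` satisfies `ω(v) > 1 - 1/(3 f(v))` when `f(v) > 0`, where
`f(v) = min (d⁻(v)/n + 5/6 - 1) (5/12)`; in particular `ω(v) ≥ 1 - 2/(3·(5/6))` when
`d⁻(v) ≥ (1 - 5/12)n`. -/
theorem stmt_19 (n : ℕ) (G : Fin n → Fin n → Prop) (hirr : ∀ v, ¬ G v v)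
    (hdeg : ∀ v : Fin n, (Set.ncard {w | G v w} : ℝ) = (5 / 6 : ℝ) * n)
    (ω : Fin n → ℝ) (hω : ∀ v, 0 ≤ ω v ∧ ω v ≤ 1)
    (htriple : ∀ x y z : Fin n, x ≠ y → x ≠ z → y ≠ z →
      (∀ a ∈ ({x, y, z} : Finset (Fin n)), ∀ b ∈ ({x, y, z} : Finset (Fin n)),
        a ≠ b → G a b ∨ G b a) →
      (∀ a ∈ ({x, y, z} : Finset (Fin n)), ∃ b ∈ ({x, y, z} : Finset (Fin n)), G a b) →
      1 ≤ ω x + ω y + ω z)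
    (hsum : ∑ v : Fin n, ω v < (n : ℝ) / 3) :
    ∀ v : Fin n,
      (0 < min ((Set.ncard {w | G w v} : ℝ) / n + 5 / 6 - 1) (5 / 12) →
        1 - 1 / (3 * min ((Set.ncard {w | G w v} : ℝ) / n + 5 / 6 - 1) (5 / 12)) < ω v) ∧
      ((1 - 5 / 12) * (n : ℝ) ≤ (Set.ncard {w | G w v} : ℝ) →
        1 - 2 / (3 * (5 / 6)) ≤ ω v) := by
  classical
  intro v
  have hn : (0 : ℝ) < n := by exact_mod_cast v.pos
  have hout (u : Fin n) : Set.ncard {w | G u w} = #(outNbhd G u) := by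
    rw [Set.ncard_eq_toFinset_card', Set.toFinset_ofPred]; rfl
  have hin : Set.ncard {w | G w v} = #(inNbhd G v) := by
    rw [Set.ncard_eq_toFinset_card', Set.toFinset_ofPred]; rfl
  simp only [hout] at hdeg
  rw [hin]
  set D : ℝ := (#(inNbhd G v) : ℝ)
  have bound (f : ℝ) (hf : 0 < f) (hf_in : f ≤ D / n + 5 / 6 - 1) (hf_out : f ≤ 5 / 12) :
      1 - 1 / (3 * f) < ω v := by
    have hm_in : f * n ≤ D + 5 / 6 * n - n := by
      nlinarith [mul_le_mul_of_nonneg_right hf_in hn.le, div_mul_cancel₀ D hn.ne']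
    have hweight := mul_one_sub_le_sum_of_isK31Triple hirr (d := 5 / 6 * n) (fun u => (hdeg u).ge)
      (fun u => (hω u).1) (fun x y z h => htriple x y z h.1 h.2.1 h.2.2.1 h.2.2.2.1 h.2.2.2.2)
      v (m := f * n) (by positivity) (by rwa [Fintype.card_fin]) (by nlinarith)
    have hf_lt : f * (1 - ω v) < 1 / 3 := by nlinarith
    have : 1 - ω v < 1 / (3 * f) := by rw [lt_div_iff₀ (by positivity)]; linarith
    linarith
  refine ⟨fun hf => bound _ hf (min_le_left _ _) (min_le_right _ _), fun hD => ?_⟩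
  have hDn : 7 / 12 ≤ D / n := by rw [le_div_iff₀ hn]; linarith
  have hbound := bound (5 / 12) (by norm_num) (by linarith) le_rfl
  norm_num at hbound ⊢
  exact hbound.le
end
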